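/- arXiv:2012.11051 — 4 statements merged into one kernel-verified Lean document; each statement's English description precedes it below -/
import Mathlib

section
/- Let A and B be unital prime complex *-algebras whose centers equal ℂ·1 and which each contain a nontrivial projection. Then a bijective mapping Φ : A → B satisfies Φ(ab + ba*) = Φ(a)Φ(b) + Φ(b)Φ(a)* for all elements a, b ∈ A if and only if Φ is a *-ring isomorphism. -/
/-!
Write `a ∙ b = a b + b a*`. If `Φ t = Φ a + Φ b`, then `Φ (x ∙ t) = Φ (x ∙ a) + Φ (x ∙ b)` and
`Φ (t ∙ x) = Φ (a ∙ x) + Φ (b ∙ x)`; whenever `Φ` is already known to be additive on the two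
summands on the right, injectivity gives `x ∙ (t - a - b) = 0` (resp. `(t - a - b) ∙ x = 0`).
For `x` among `p`, `1 - p`, `2p - 1` and `p w (1 - p)` this kills all Peirce components of
`t - a - b` with respect to the projection `p`, so `t = a + b`. Going through the Peirce corners in
a suitable order, with primeness of `A` for the diagonal ones, yields additivity.

Then `Φ 1 = c` and `Φ i = δ` are central scalars with `Re c = 1`, `Re δ = 0`, and
`c Φ (i h) = δ Φ h` for self-adjoint `h`, so the images of self-adjoint elements span `B`. If
`c ≠ 1` these images commute, which is impossible in a prime algebra with a nontrivial projection;
hence `Φ 1 = 1` and `Φ` preserves `*`. Computing `Φ (g h g)` in two ways for a self-adjoint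
preimage `g` of a projection `q` gives `(1 + δ²) q Φ(h) (1 - q) = 0`, so `δ² = -1` and
`Φ (i a) = δ Φ a` for all `a`. Finally the identity at `(i a, b)`, divided by `δ`, added to the
identity at `(a, b)` gives `Φ (a b) = Φ a Φ b`.
-/

open Complex ComplexConjugate ComplexStarModule Function

def PreservesJordanStarProduct {A B : Type*} [Add A] [Mul A] [Star A] [Add B] [Mul B] [Star B]
    (Φ : A → B) : Prop :=
  ∀ a b : A, Φ (a * b + b * star a) = Φ a * Φ b + Φ b * star (Φ a)

theorem eq_of_add_self_eq_add_self {M : Type*} [AddMonoid M] [IsAddTorsionFree M] {x y : M}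
    (h : x + x = y + y) : x = y :=
  nsmul_right_injective two_ne_zero (by simpa only [two_nsmul] using h)

structure IsComplementaryProjections {A : Type*} [Ring A] [Star A] (p q : A) : Prop where
  isStarProjection : IsStarProjection p
  add_eq_one : p + q = 1

namespace IsComplementaryProjections

variable {A : Type*} [Ring A] [StarRing A] {p q : A}

theorem eq_one_sub (h : IsComplementaryProjections p q) : q = 1 - p :=
  eq_sub_of_add_eq' h.add_eq_one

theorem symm (h : IsComplementaryProjections p q) : IsComplementaryProjections q p :=
  ⟨h.eq_one_sub ▸ h.isStarProjection.one_sub, by rw [add_comm, h.add_eq_one]⟩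

theorem star_left (h : IsComplementaryProjections p q) : star p = p :=
  h.isStarProjection.isSelfAdjoint.star_eq

theorem star_right (h : IsComplementaryProjections p q) : star q = q :=
  h.symm.star_left

theorem mul_table (h : IsComplementaryProjections p q) :
    p * p = p ∧ p * q = 0 ∧ q * p = 0 ∧ q * q = q ∧
      ∀ x, p * (p * x) = p * x ∧ p * (q * x) = 0 ∧ q * (p * x) = 0 ∧ q * (q * x) = q * x := by
  have hpp : p * p = p := h.isStarProjection.isIdempotentElem
  have hqq : q * q = q := h.symm.isStarProjection.isIdempotentElem
  have hpq : p * q = 0 := h.eq_one_sub ▸ h.isStarProjection.mul_one_sub_self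
  have hqp : q * p = 0 := h.eq_one_sub ▸ h.isStarProjection.one_sub_mul_self
  refine ⟨hpp, hpq, hqp, hqq, fun x => ?_⟩
  simp only [← mul_assoc, hpp, hpq, hqp, hqq, zero_mul, and_self]

theorem peirce_sum (h : IsComplementaryProjections p q) (t : A) :
    p * t * p + p * t * q + q * t * p + q * t * q = t :=
  calc _ = (p + q) * t * (p + q) := by noncomm_ring
    _ = t := by rw [h.add_eq_one, one_mul, mul_one]

theorem eq_zero_of_peirce (h : IsComplementaryProjections p q) {d : A} (h₁₁ : p * d * p = 0)
    (h₁₂ : p * d * q = 0) (h₂₁ : q * d * p = 0) (h₂₂ : q * d * q = 0) : d = 0 := by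
  rw [← h.peirce_sum d, h₁₁, h₁₂, h₂₁, h₂₂, add_zero, add_zero, add_zero]

theorem mul_mul_eq_zero_of_mul_add_mul_star (h : IsComplementaryProjections p q) {d : A}
    (hd : d * q + q * star d = 0) : p * d * q = 0 := by
  simpa [mul_add, add_mul, mul_assoc, h.mul_table] using congr(p * $hd * q)

variable [IsAddTorsionFree A]

theorem peirce_eq_zero_of_mul_add_mul_star (h : IsComplementaryProjections p q) {d : A}
    (hd : p * d + d * star p = 0) : p * d * p = 0 ∧ p * d * q = 0 ∧ q * d * p = 0 := by
  have key (x y : A) : x * (p * d + d * star p) * y = 0 := by rw [hd, mul_zero, zero_mul]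
  refine ⟨eq_of_add_self_eq_add_self ?_, ?_, ?_⟩
  · simpa [mul_add, add_mul, mul_assoc, h.star_left, h.mul_table] using key p p
  · simpa [mul_add, add_mul, mul_assoc, h.star_left, h.mul_table] using key p q
  · simpa [mul_add, add_mul, mul_assoc, h.star_left, h.mul_table] using key q p

theorem diag_eq_zero_of_sub_mul_add_mul_star (h : IsComplementaryProjections p q) {d : A}
    (hd : (p - q) * d + d * star (p - q) = 0) : p * d * p = 0 ∧ q * d * q = 0 := by
  have key (x y : A) : x * ((p - q) * d + d * star (p - q)) * y = 0 := by
    rw [hd, mul_zero, zero_mul]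
  refine ⟨eq_of_add_self_eq_add_self ?_, neg_eq_zero.1 (eq_of_add_self_eq_add_self ?_)⟩
  · simpa [mul_add, add_mul, mul_sub, sub_mul, mul_assoc, h.star_left, h.star_right,
      h.mul_table] using key p p
  · simpa [mul_add, add_mul, mul_sub, sub_mul, mul_assoc, h.star_left, h.star_right,
      h.mul_table, neg_add] using key q q

end IsComplementaryProjections

namespace PreservesJordanStarProduct

section

variable {A B : Type*} [Ring A] [StarRing A] [Ring B] [StarRing B] {Φ : A → B}

theorem map_zero_of_surjective (hΦ : PreservesJordanStarProduct Φ) (hsurj : Surjective Φ) :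
    Φ 0 = 0 := by
  obtain ⟨b, hb⟩ := hsurj 0
  simpa [hb] using hΦ 0 b

theorem left_sub_eq_zero (hΦ : PreservesJordanStarProduct Φ) (hinj : Injective Φ) {t a b : A}
    (ht : Φ t = Φ a + Φ b) (x : A)
    (hx : Φ (x * a + a * star x + (x * b + b * star x)) =
      Φ (x * a + a * star x) + Φ (x * b + b * star x)) :
    x * (t - (a + b)) + (t - (a + b)) * star x = 0 := by
  have hxt : x * t + t * star x = x * a + a * star x + (x * b + b * star x) :=
    hinj <| by rw [hx, hΦ, hΦ, hΦ, ht]; noncomm_ring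
  rw [mul_sub, sub_mul, sub_add_sub_comm, hxt]
  noncomm_ring

theorem right_sub_eq_zero (hΦ : PreservesJordanStarProduct Φ) (hinj : Injective Φ) {t a b : A}
    (ht : Φ t = Φ a + Φ b) (x : A)
    (hx : Φ (a * x + x * star a + (b * x + x * star b)) =
      Φ (a * x + x * star a) + Φ (b * x + x * star b)) :
    (t - (a + b)) * x + x * star (t - (a + b)) = 0 := by
  have htx : t * x + x * star t = a * x + x * star a + (b * x + x * star b) :=
    hinj <| by rw [hx, hΦ, hΦ, hΦ, ht, star_add]; noncomm_ring
  rw [star_sub, sub_mul, mul_sub, sub_add_sub_comm, htx, star_add]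
  noncomm_ring

variable [IsAddTorsionFree A] {p q : A}

theorem map_pq_add_qp (hΦ : PreservesJordanStarProduct Φ) (hΦb : Bijective Φ)
    (h : IsComplementaryProjections p q) (x y : A) :
    Φ (p * x * q + q * y * p) = Φ (p * x * q) + Φ (q * y * p) := by
  have h0 := hΦ.map_zero_of_surjective hΦb.2
  obtain ⟨t, ht⟩ := hΦb.2 (Φ (p * x * q) + Φ (q * y * p))
  have e₁ := hΦ.left_sub_eq_zero hΦb.1 ht (p - q) <| by
    rw [show (p - q) * (p * x * q) + p * x * q * star (p - q) = 0 by
        simp [mul_sub, sub_mul, mul_assoc, h.star_left, h.star_right, h.mul_table],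
      show (p - q) * (q * y * p) + q * y * p * star (p - q) = 0 by
        simp [mul_sub, sub_mul, mul_assoc, h.star_left, h.star_right, h.mul_table],
      add_zero, h0, add_zero]
  have e₂ := hΦ.right_sub_eq_zero hΦb.1 ht p <| by
    rw [show p * x * q * p + p * star (p * x * q) = 0 by
        simp [mul_assoc, h.star_left, h.star_right, h.mul_table], zero_add, h0, zero_add]
  have e₃ := hΦ.right_sub_eq_zero hΦb.1 ht q <| by
    rw [show q * y * p * q + q * star (q * y * p) = 0 by
        simp [mul_assoc, h.star_left, h.star_right, h.mul_table], add_zero, h0, add_zero]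
  obtain ⟨h₁₁, h₂₂⟩ := h.diag_eq_zero_of_sub_mul_add_mul_star e₁
  rw [← ht, sub_eq_zero.1 (h.eq_zero_of_peirce h₁₁ (h.mul_mul_eq_zero_of_mul_add_mul_star e₃)
    (h.symm.mul_mul_eq_zero_of_mul_add_mul_star e₂) h₂₂)]

theorem map_pp_add_offDiag (hΦ : PreservesJordanStarProduct Φ) (hΦb : Bijective Φ)
    (h : IsComplementaryProjections p q) (x y z : A) :
    Φ (p * x * p + (p * y * q + q * z * p)) = Φ (p * x * p) + Φ (p * y * q + q * z * p) := by
  have h0 := hΦ.map_zero_of_surjective hΦb.2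
  obtain ⟨t, ht⟩ := hΦb.2 (Φ (p * x * p) + Φ (p * y * q + q * z * p))
  have e₁ := hΦ.left_sub_eq_zero hΦb.1 ht (p - q) <| by
    rw [show (p - q) * (p * y * q + q * z * p) + (p * y * q + q * z * p) * star (p - q) = 0 by
        simp [mul_add, add_mul, mul_sub, sub_mul, mul_assoc, h.star_left, h.star_right,
          h.mul_table]; abel,
      add_zero, h0, add_zero]
  have e₂ := hΦ.left_sub_eq_zero hΦb.1 ht q <| by
    rw [show q * (p * x * p) + p * x * p * star q = 0 by
        simp [mul_assoc, h.star_right, h.mul_table], zero_add, h0, zero_add]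
  obtain ⟨h₂₂, h₂₁, h₁₂⟩ := h.symm.peirce_eq_zero_of_mul_add_mul_star e₂
  rw [← ht, sub_eq_zero.1 (h.eq_zero_of_peirce (h.diag_eq_zero_of_sub_mul_add_mul_star e₁).1
    h₁₂ h₂₁ h₂₂)]

theorem map_add_qq (hΦ : PreservesJordanStarProduct Φ) (hΦb : Bijective Φ)
    (h : IsComplementaryProjections p q) (x y z w : A) :
    Φ (p * x * p + (p * y * q + q * z * p) + q * w * q) =
      Φ (p * x * p + (p * y * q + q * z * p)) + Φ (q * w * q) := by
  have h0 := hΦ.map_zero_of_surjective hΦb.2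
  obtain ⟨t, ht⟩ := hΦb.2 (Φ (p * x * p + (p * y * q + q * z * p)) + Φ (q * w * q))
  have e₁ := hΦ.left_sub_eq_zero hΦb.1 ht p <| by
    rw [show p * (q * w * q) + q * w * q * star p = 0 by
        simp [mul_assoc, h.star_left, h.mul_table], add_zero, h0, add_zero]
  have e₂ := hΦ.left_sub_eq_zero hΦb.1 ht q <| by
    rw [show q * (p * x * p + (p * y * q + q * z * p)) +
          (p * x * p + (p * y * q + q * z * p)) * star q = q * z * p + p * y * q by
        simp [mul_add, add_mul, mul_assoc, h.star_right, h.mul_table],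
      show q * (q * w * q) + q * w * q * star q = q * (w + w) * q by
        simp [mul_add, add_mul, mul_assoc, h.star_right, h.mul_table],
      add_comm (q * z * p + p * y * q), hΦ.map_pp_add_offDiag hΦb h.symm, add_comm]
  obtain ⟨h₁₁, h₁₂, h₂₁⟩ := h.peirce_eq_zero_of_mul_add_mul_star e₁
  rw [← ht, sub_eq_zero.1 (h.eq_zero_of_peirce h₁₁ h₁₂ h₂₁
    (h.symm.peirce_eq_zero_of_mul_add_mul_star e₂).1)]

theorem map_eq_peirce_sum (hΦ : PreservesJordanStarProduct Φ) (hΦb : Bijective Φ)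
    (h : IsComplementaryProjections p q) (t : A) :
    Φ t = Φ (p * t * p) + Φ (p * t * q) + Φ (q * t * p) + Φ (q * t * q) :=
  calc Φ t = Φ (p * t * p + (p * t * q + q * t * p) + q * t * q) := by
        rw [← add_assoc, h.peirce_sum]
    _ = _ := by
      rw [hΦ.map_add_qq hΦb h, hΦ.map_pp_add_offDiag hΦb h, hΦ.map_pq_add_qp hΦb h, ← add_assoc]

theorem map_pq_add_pq (hΦ : PreservesJordanStarProduct Φ) (hΦb : Bijective Φ)
    (h : IsComplementaryProjections p q) (x y : A) :
    Φ (p * x * q + p * y * q) = Φ (p * x * q) + Φ (p * y * q) := by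
  have h0 := hΦ.map_zero_of_surjective hΦb.2
  have hsum := hΦ.map_eq_peirce_sum hΦb h
  have hp : Φ (p + p * y * q) = Φ p + Φ (p * y * q) := by
    rw [hsum]; simp [mul_add, add_mul, mul_assoc, h.mul_table, h0]
  have hq : Φ (p * x * q + q) = Φ (p * x * q) + Φ q := by
    rw [hsum]; simp [mul_add, mul_assoc, h.mul_table, h0]
  have hoff := hΦ.map_pq_add_qp hΦb h y (star y)
  -- `(p + p y q) ∙ (p x q + q)` has Peirce components `p x q y* p`, `p x q + p y q`, `q y* p`, `0`,
  -- while expanding `Φ` of it yields four products that are already known.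
  have key := hΦ (p + p * y * q) (p * x * q + q)
  rw [hp, hq, star_add (Φ p), show ∀ P Y X Q : B, (P + Y) * (X + Q) + (X + Q) * (star P + star Y) =
      (P * X + X * star P) + (P * Q + Q * star P) + (Y * X + X * star Y) + (Y * Q + Q * star Y)
      by intros; noncomm_ring, ← hΦ, ← hΦ, ← hΦ, ← hΦ, hsum] at key
  simp only [mul_add, add_mul, mul_assoc, star_add, star_mul, h.star_left, h.star_right,
    h.mul_table, mul_zero, zero_add, add_zero, h0] at key hoff ⊢
  rw [hoff] at key
  linear_combination (norm := abel) key

theorem map_pp_add_pp (hΦ : PreservesJordanStarProduct Φ) (hΦb : Bijective Φ)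
    (h : IsComplementaryProjections p q)
    (hprime : ∀ a b : A, (∀ x : A, a * x * b = 0) → a = 0 ∨ b = 0) (hq : q ≠ 0) (x y : A) :
    Φ (p * x * p + p * y * p) = Φ (p * x * p) + Φ (p * y * p) := by
  have h0 := hΦ.map_zero_of_surjective hΦb.2
  obtain ⟨t, ht⟩ := hΦb.2 (Φ (p * x * p) + Φ (p * y * p))
  have e₁ := hΦ.left_sub_eq_zero hΦb.1 ht q <| by
    rw [show q * (p * x * p) + p * x * p * star q = 0 by
        simp [mul_assoc, h.star_right, h.mul_table],
      show q * (p * y * p) + p * y * p * star q = 0 by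
        simp [mul_assoc, h.star_right, h.mul_table], add_zero, h0, add_zero]
  have e₂ (w : A) := hΦ.right_sub_eq_zero hΦb.1 ht (p * w * q) <| by
    rw [show p * x * p * (p * w * q) + p * w * q * star (p * x * p) = p * (x * p * w) * q by
        simp [mul_assoc, h.star_left, h.mul_table],
      show p * y * p * (p * w * q) + p * w * q * star (p * y * p) = p * (y * p * w) * q by
        simp [mul_assoc, h.star_left, h.mul_table], hΦ.map_pq_add_pq hΦb h]
  generalize hd : t - (p * x * p + p * y * p) = d at e₁ e₂
  obtain ⟨h₂₂, h₂₁, h₁₂⟩ := h.symm.peirce_eq_zero_of_mul_add_mul_star e₁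
  have h₂₂' : q * (star d * q) = 0 := by
    simpa [mul_assoc, h.star_right] using congr(star $h₂₂)
  have hcorner : ∀ w, p * d * p * w * q = 0 := fun w => by
    simpa [mul_add, add_mul, mul_assoc, h.mul_table, h₂₂'] using congr(p * $(e₂ w) * q)
  obtain h₁₁ | hq0 := hprime _ _ hcorner
  · rw [← ht, sub_eq_zero.1 (hd.trans (h.eq_zero_of_peirce h₁₁ h₁₂ h₂₁ h₂₂))]
  · exact absurd hq0 hq

theorem map_add_of_bijective (hΦ : PreservesJordanStarProduct Φ) (hΦb : Bijective Φ)
    (h : IsComplementaryProjections p q)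
    (hprime : ∀ a b : A, (∀ x : A, a * x * b = 0) → a = 0 ∨ b = 0) (hp : p ≠ 0) (hq : q ≠ 0)
    (a b : A) : Φ (a + b) = Φ a + Φ b := by
  rw [hΦ.map_eq_peirce_sum hΦb h (a + b), hΦ.map_eq_peirce_sum hΦb h a,
    hΦ.map_eq_peirce_sum hΦb h b]
  simp only [mul_add, add_mul]
  rw [hΦ.map_pp_add_pp hΦb h hprime hq, hΦ.map_pq_add_pq hΦb h, hΦ.map_pq_add_pq hΦb h.symm,
    hΦ.map_pp_add_pp hΦb h.symm hprime hp]
  abel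

end

end PreservesJordanStarProduct

section

variable {A B : Type*} [Ring A] [StarRing A] [Ring B] [StarRing B] {Φ : A →+ B}

namespace PreservesJordanStarProduct

theorem map_star_of_map_one (hΦ : PreservesJordanStarProduct Φ) (h1 : Φ 1 = 1) (a : A) :
    Φ (star a) = star (Φ a) := by
  have key := hΦ a 1
  rw [mul_one, one_mul, map_add, h1, mul_one, one_mul] at key
  exact add_left_cancel key

theorem map_mul_add_mul_of_isSelfAdjoint (hΦ : PreservesJordanStarProduct Φ) (h1 : Φ 1 = 1)
    {g : A} (hg : IsSelfAdjoint g) (h : A) : Φ (g * h + h * g) = Φ g * Φ h + Φ h * Φ g := by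
  simpa only [hg.star_eq, ← hΦ.map_star_of_map_one h1 g] using hΦ g h

theorem map_mul_mul_of_isSelfAdjoint [IsAddTorsionFree B] (hΦ : PreservesJordanStarProduct Φ)
    (h1 : Φ 1 = 1) {g : A} (hg : IsSelfAdjoint g) (h : A) : Φ (g * h * g) = Φ g * Φ h * Φ g := by
  have hgg : IsSelfAdjoint (g * g) := by rw [IsSelfAdjoint, star_mul, hg.star_eq]
  have hsq : Φ (g * g) = Φ g * Φ g :=
    eq_of_add_self_eq_add_self (by rw [← map_add, hΦ.map_mul_add_mul_of_isSelfAdjoint h1 hg g])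
  have key := hΦ.map_mul_add_mul_of_isSelfAdjoint h1 hg (g * h + h * g)
  rw [hΦ.map_mul_add_mul_of_isSelfAdjoint h1 hg h,
    show g * (g * h + h * g) + (g * h + h * g) * g =
        g * g * h + h * (g * g) + (g * h * g + g * h * g) by noncomm_ring, map_add Φ (g * g * h + h * (g * g)),
    hΦ.map_mul_add_mul_of_isSelfAdjoint h1 hgg h, hsq, map_add Φ (g * h * g)] at key
  apply eq_of_add_self_eq_add_self
  linear_combination (norm := noncomm_ring) key

end PreservesJordanStarProduct

end

section

variable {A B : Type*} [Ring A] [StarRing A] [Ring B] [StarRing B] [Algebra ℂ B]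

theorem exists_eq_smul_one_of_forall_mul_add_mul_star [StarModule ℂ B]
    (hcenter : ∀ b : B, (∀ x : B, b * x = x * b) → ∃ c : ℂ, b = c • (1 : B)) (hB : (1 : B) ≠ 0)
    {z : B} {r : ℂ} (hz : ∀ y : B, z * y + y * star z = r • y) :
    ∃ c : ℂ, z = c • 1 ∧ conj c = r - c := by
  have hstar : star z = r • 1 - z := by rw [← hz 1, mul_one, one_mul, add_sub_cancel_left]
  obtain ⟨c, rfl⟩ := hcenter z fun y => by
    have := hz y
    rw [hstar, mul_sub, mul_smul_comm, mul_one] at this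
    linear_combination (norm := abel) this
  refine ⟨c, rfl, smul_left_injective ℂ hB ?_⟩
  simpa [sub_smul] using hstar

namespace PreservesJordanStarProduct

variable {Φ : A →+ B}

theorem exists_map_one_eq [StarModule ℂ B] (hΦ : PreservesJordanStarProduct Φ)
    (hsurj : Surjective Φ)
    (hcenter : ∀ b : B, (∀ x : B, b * x = x * b) → ∃ c : ℂ, b = c • (1 : B)) (hB : (1 : B) ≠ 0) :
    ∃ c : ℂ, Φ 1 = c • 1 ∧ conj c = 2 - c :=
  exists_eq_smul_one_of_forall_mul_add_mul_star hcenter hB fun y => by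
    obtain ⟨a, rfl⟩ := hsurj y
    rw [← hΦ, one_mul, star_one, mul_one, map_add, two_smul]

theorem smul_star_map_of_isSelfAdjoint (hΦ : PreservesJordanStarProduct Φ) {c : ℂ}
    (hc : Φ 1 = c • 1) (hc2 : conj c = 2 - c) {h : A} (hh : IsSelfAdjoint h) :
    c • star (Φ h) = conj c • Φ h := by
  have key := hΦ h 1
  rw [mul_one, one_mul, hh.star_eq, map_add, hc, mul_smul_comm, mul_one, smul_mul_assoc,
    one_mul] at key
  rw [hc2]
  linear_combination (norm := module) -key

theorem smul_map_I_smul_of_isSelfAdjoint [Algebra ℂ A] (hΦ : PreservesJordanStarProduct Φ) {c δ : ℂ}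
    (hc : Φ 1 = c • 1) (hc2 : conj c = 2 - c) (hδ : Φ (I • 1) = δ • 1) {h : A}
    (hh : IsSelfAdjoint h) : c • Φ (I • h) = δ • Φ h := by
  have : IsAddTorsionFree B := .of_isTorsionFree ℂ B
  have key := hΦ h (I • 1)
  rw [mul_smul_comm, mul_one, smul_mul_assoc, one_mul, hh.star_eq, map_add, hδ, mul_smul_comm,
    mul_one, smul_mul_assoc, one_mul] at key
  have hs := hΦ.smul_star_map_of_isSelfAdjoint hc hc2 hh
  rw [hc2] at hs
  apply eq_of_add_self_eq_add_self
  linear_combination (norm := module) c • key + δ • hs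

theorem smul_commutator_eq_zero (hΦ : PreservesJordanStarProduct Φ) {c : ℂ}
    (hc : Φ 1 = c • 1) (hc2 : conj c = 2 - c) {g h : A} (hg : IsSelfAdjoint g)
    (hh : IsSelfAdjoint h) : (c - conj c) • (Φ g * Φ h - Φ h * Φ g) = 0 := by
  have e : Φ g * Φ h + Φ h * star (Φ g) = Φ h * Φ g + Φ g * star (Φ h) := by
    rw [← hΦ, ← hΦ, hg.star_eq, hh.star_eq, add_comm]
  have e₁ : c • (Φ h * star (Φ g)) = conj c • (Φ h * Φ g) := by
    rw [← mul_smul_comm, hΦ.smul_star_map_of_isSelfAdjoint hc hc2 hg, mul_smul_comm]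
  have e₂ : c • (Φ g * star (Φ h)) = conj c • (Φ g * Φ h) := by
    rw [← mul_smul_comm, hΦ.smul_star_map_of_isSelfAdjoint hc hc2 hh, mul_smul_comm]
  linear_combination (norm := module) c • e - e₁ + e₂

end PreservesJordanStarProduct

end

section

variable {A B : Type*} [Ring A] [StarRing A] [Algebra ℂ A] [StarModule ℂ A] [Ring B] [Algebra ℂ B]
  {Φ : A →+ B}

theorem exists_eq_map_add_smul_map (hsurj : Surjective Φ) {ε : ℂ}
    (hε : ∀ h : A, IsSelfAdjoint h → Φ (I • h) = ε • Φ h) (y : B) :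
    ∃ h k : A, IsSelfAdjoint h ∧ IsSelfAdjoint k ∧ y = Φ h + ε • Φ k := by
  obtain ⟨a, rfl⟩ := hsurj y
  refine ⟨ℜ a, ℑ a, (ℜ a).2, (ℑ a).2, ?_⟩
  rw [← hε _ (ℑ a).2, ← map_add, realPart_add_I_smul_imaginaryPart]

theorem exists_isSelfAdjoint_mul_map_mul_ne_zero (hsurj : Surjective Φ) {ε : ℂ}
    (hε : ∀ h : A, IsSelfAdjoint h → Φ (I • h) = ε • Φ h)
    (hprime : ∀ a b : B, (∀ x : B, a * x * b = 0) → a = 0 ∨ b = 0) {q : B} (hq0 : q ≠ 0)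
    (hq1 : q ≠ 1) : ∃ h : A, IsSelfAdjoint h ∧ q * Φ h * (1 - q) ≠ 0 := by
  by_contra! H
  have hall (y : B) : q * y * (1 - q) = 0 := by
    obtain ⟨h, k, hh, hk, rfl⟩ := exists_eq_map_add_smul_map hsurj hε y
    rw [mul_add, add_mul, mul_smul_comm, smul_mul_assoc, H h hh, H k hk, smul_zero, add_zero]
  obtain h | h := hprime q (1 - q) hall
  exacts [hq0 h, hq1 (sub_eq_zero.1 h).symm]

theorem exists_isSelfAdjoint_map_eq [StarRing B] (hstar : ∀ a, Φ (star a) = star (Φ a))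
    (hsurj : Surjective Φ) {y : B} (hy : IsSelfAdjoint y) : ∃ g : A, IsSelfAdjoint g ∧ Φ g = y := by
  have : IsAddTorsionFree B := .of_isTorsionFree ℂ B
  obtain ⟨a, rfl⟩ := hsurj y
  refine ⟨ℜ a, (ℜ a).2, eq_of_add_self_eq_add_self ?_⟩
  rw [← map_add, show (ℜ a : A) + ℜ a = a + star a by
    rw [realPart_apply_coe, ← two_smul ℝ, smul_smul]; norm_num, map_add, hstar, hy.star_eq]

variable [StarRing B] [StarModule ℂ B]

namespace PreservesJordanStarProduct

theorem exists_map_I_smul_one_eq (hΦ : PreservesJordanStarProduct Φ) (hsurj : Surjective Φ)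
    (hcenter : ∀ b : B, (∀ x : B, b * x = x * b) → ∃ c : ℂ, b = c • (1 : B)) (hB : (1 : B) ≠ 0) :
    ∃ δ : ℂ, Φ (I • 1) = δ • 1 ∧ conj δ = -δ := by
  obtain ⟨δ, hδ, hδc⟩ := exists_eq_smul_one_of_forall_mul_add_mul_star hcenter hB (r := 0)
    (z := Φ (I • 1)) fun y => by
      obtain ⟨a, rfl⟩ := hsurj y
      rw [← hΦ, zero_smul, star_smul, star_one, Complex.star_def, conj_I, smul_mul_assoc,
        mul_smul_comm, one_mul, mul_one, neg_smul, add_neg_cancel, map_zero]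
  exact ⟨δ, hδ, by rw [hδc, zero_sub]⟩

theorem map_one_eq_one (hΦ : PreservesJordanStarProduct Φ) (hsurj : Surjective Φ)
    (hprime : ∀ a b : B, (∀ x : B, a * x * b = 0) → a = 0 ∨ b = 0)
    (hcenter : ∀ b : B, (∀ x : B, b * x = x * b) → ∃ c : ℂ, b = c • (1 : B))
    {q : B} (hq0 : q ≠ 0) (hq1 : q ≠ 1) (hqq : q * q = q) : Φ 1 = 1 := by
  have hB : (1 : B) ≠ 0 := fun h => hq0 (by rw [← mul_one q, h, mul_zero])
  obtain ⟨c, hc, hc2⟩ := hΦ.exists_map_one_eq hsurj hcenter hB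
  obtain ⟨δ, hδ, -⟩ := hΦ.exists_map_I_smul_one_eq hsurj hcenter hB
  suffices c = 1 by rw [hc, this, one_smul]
  -- Otherwise `c` is not real, so the images of self-adjoint elements commute; since they span
  -- `B`, the projection `q` is central, against primeness.
  by_contra hc1
  have hc0 : c ≠ 0 := by
    rintro rfl
    norm_num at hc2
  have hnonreal : c - conj c ≠ 0 := by
    rw [hc2]
    exact fun h => hc1 (by linear_combination h / 2)
  have hε (h : A) (hh : IsSelfAdjoint h) : Φ (I • h) = (c⁻¹ * δ) • Φ h := by
    rw [mul_smul, ← hΦ.smul_map_I_smul_of_isSelfAdjoint hc hc2 hδ hh, inv_smul_smul₀ hc0]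
  have hcomm {g h : A} (hg : IsSelfAdjoint g) (hh : IsSelfAdjoint h) :
      Φ g * Φ h = Φ h * Φ g :=
    sub_eq_zero.1 ((smul_eq_zero_iff_right hnonreal).1 (hΦ.smul_commutator_eq_zero hc hc2 hg hh))
  obtain ⟨h, hh, hne⟩ := exists_isSelfAdjoint_mul_map_mul_ne_zero hsurj hε hprime hq0 hq1
  obtain ⟨g, k, hg, hk, hq⟩ := exists_eq_map_add_smul_map hsurj hε q
  have hqh : q * Φ h = Φ h * q := by
    rw [hq, add_mul, mul_add, smul_mul_assoc, mul_smul_comm, hcomm hg hh, hcomm hk hh]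
  exact hne (by rw [hqh, mul_assoc, mul_sub, mul_one, hqq, sub_self, mul_zero])

theorem map_mul_add_self_of_isSelfAdjoint (hΦ : PreservesJordanStarProduct Φ) (h1 : Φ 1 = 1)
    {δ : ℂ} (hδc : conj δ = -δ) (hδ : ∀ h : A, IsSelfAdjoint h → Φ (I • h) = δ • Φ h)
    {g h : A} (hg : IsSelfAdjoint g) (hh : IsSelfAdjoint h) :
    Φ (g * h) + Φ (g * h) = (1 - δ * δ) • (Φ g * Φ h) + (1 + δ * δ) • (Φ h * Φ g) := by
  have e₁ := hΦ.map_mul_add_mul_of_isSelfAdjoint h1 hg h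
  have e₂ := hΦ (I • h) (I • g)
  rw [show I • h * I • g + I • g * star (I • h) = g * h - h * g by
      simp [smul_smul, hh.star_eq, sub_eq_add_neg, add_comm],
    hδ h hh, hδ g hg, star_smul, Complex.star_def, hδc, ← hΦ.map_star_of_map_one h1, hh.star_eq]
    at e₂
  simp only [smul_mul_assoc, mul_smul_comm, smul_smul] at e₂
  have e := congrArg₂ (· + ·) e₁ e₂
  rw [← map_add, show g * h + h * g + (g * h - h * g) = g * h + g * h by abel, map_add] at e
  linear_combination (norm := module) e

theorem smul_mul_map_mul_one_sub_eq_zero (hΦ : PreservesJordanStarProduct Φ) (h1 : Φ 1 = 1)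
    {δ : ℂ} (hδc : conj δ = -δ) (hδ : ∀ h : A, IsSelfAdjoint h → Φ (I • h) = δ • Φ h)
    {g h : A} (hg : IsSelfAdjoint g) (hh : IsSelfAdjoint h) (hgg : Φ g * Φ g = Φ g) :
    (1 + δ * δ) • (Φ g * Φ h * (1 - Φ g)) = 0 := by
  have : IsAddTorsionFree B := .of_isTorsionFree ℂ B
  have hQ : Φ g * (1 - Φ g) = 0 := by rw [mul_sub, mul_one, hgg, sub_self]
  have hQQ (y : B) : Φ g * (Φ g * y) = Φ g * y := by rw [← mul_assoc, hgg]
  -- `Φ (g h g + g h g)` by the identity at `(g h, g)` and by the Jordan triple product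
  have e₁ : Φ (g * h) * Φ g + Φ g * Φ (h * g) = Φ g * Φ h * Φ g + Φ g * Φ h * Φ g := by
    have key := hΦ (g * h) g
    have hs : star (g * h) = h * g := by rw [star_mul, hg.star_eq, hh.star_eq]
    rw [← hΦ.map_star_of_map_one h1, hs, ← mul_assoc, map_add,
      hΦ.map_mul_mul_of_isSelfAdjoint h1 hg h] at key
    exact key.symm
  have e₂ : Φ g * Φ (h * g) * (1 - Φ g) = 0 := by
    simpa [add_mul, mul_add, mul_assoc, hQ, hQQ] using congr(Φ g * $e₁ * (1 - Φ g))
  calc (1 + δ * δ) • (Φ g * Φ h * (1 - Φ g)) = Φ g * (Φ (h * g) + Φ (h * g)) * (1 - Φ g) := by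
        rw [hΦ.map_mul_add_self_of_isSelfAdjoint h1 hδc hδ hh hg]
        simp [mul_add, add_mul, mul_assoc, hQ, hQQ]
    _ = 0 := by rw [mul_add, add_mul, e₂, add_zero]

theorem exists_map_I_smul (hΦ : PreservesJordanStarProduct Φ) (h1 : Φ 1 = 1)
    (hsurj : Surjective Φ) (hprime : ∀ a b : B, (∀ x : B, a * x * b = 0) → a = 0 ∨ b = 0)
    (hcenter : ∀ b : B, (∀ x : B, b * x = x * b) → ∃ c : ℂ, b = c • (1 : B))
    {q : B} (hq0 : q ≠ 0) (hq1 : q ≠ 1) (hqs : star q = q) (hqq : q * q = q) :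
    ∃ δ : ℂ, δ ≠ 0 ∧ conj δ = -δ ∧ ∀ a : A, Φ (I • a) = δ • Φ a := by
  have hB : (1 : B) ≠ 0 := fun h => hq0 (by rw [← mul_one q, h, mul_zero])
  obtain ⟨δ, hδ, hδc⟩ := hΦ.exists_map_I_smul_one_eq hsurj hcenter hB
  have hδsa (h : A) (hh : IsSelfAdjoint h) : Φ (I • h) = δ • Φ h := by
    simpa using hΦ.smul_map_I_smul_of_isSelfAdjoint (c := 1) (by rw [h1, one_smul])
      (by norm_num) hδ hh
  have hδδ : δ * δ = -1 := by
    by_contra hne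
    have hne' : 1 + δ * δ ≠ 0 := fun h => hne (by linear_combination h)
    obtain ⟨g, hg, rfl⟩ := exists_isSelfAdjoint_map_eq (hΦ.map_star_of_map_one h1) hsurj hqs
    obtain ⟨h, hh, hne₂⟩ := exists_isSelfAdjoint_mul_map_mul_ne_zero hsurj hδsa hprime hq0 hq1
    exact hne₂ ((smul_eq_zero_iff_right hne').1
      (hΦ.smul_mul_map_mul_one_sub_eq_zero h1 hδc hδsa hg hh hqq))
  refine ⟨δ, fun h => by simp [h] at hδδ, hδc, fun a => ?_⟩
  obtain ⟨h, k, hh, hk, rfl⟩ : ∃ h k : A, IsSelfAdjoint h ∧ IsSelfAdjoint k ∧ a = h + I • k :=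
    ⟨ℜ a, ℑ a, (ℜ a).2, (ℑ a).2, (realPart_add_I_smul_imaginaryPart a).symm⟩
  rw [smul_add, smul_smul, I_mul_I, neg_one_smul, map_add, map_neg, hδsa h hh, map_add,
    hδsa k hk, smul_add, smul_smul, hδδ, neg_one_smul]

theorem map_mul_of_map_I_smul (hΦ : PreservesJordanStarProduct Φ) {δ : ℂ} (hδ0 : δ ≠ 0)
    (hδc : conj δ = -δ) (hI : ∀ a : A, Φ (I • a) = δ • Φ a) (a b : A) :
    Φ (a * b) = Φ a * Φ b := by
  have : IsAddTorsionFree B := .of_isTorsionFree ℂ B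
  have e₁ := hΦ a b
  have e₂ := hΦ (I • a) b
  rw [show I • a * b + b * star (I • a) = I • (a * b - b * star a) by
      simp [sub_eq_add_neg],
    hI, hI, star_smul, Complex.star_def, hδc, map_sub] at e₂
  simp only [smul_mul_assoc, mul_smul_comm] at e₂
  have e₃ : Φ (a * b) - Φ (b * star a) = Φ a * Φ b - Φ b * star (Φ a) :=
    smul_right_injective B hδ0 (by linear_combination (norm := module) e₂)
  rw [map_add] at e₁
  apply eq_of_add_self_eq_add_self
  linear_combination (norm := abel) e₁ + e₃

end PreservesJordanStarProduct

end

theorem stmt_0_general {A B : Type*}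
    [Ring A] [Algebra ℂ A] [StarRing A] [StarModule ℂ A]
    [Ring B] [Algebra ℂ B] [StarRing B] [StarModule ℂ B]
    (hAprime : ∀ a b : A, (∀ x : A, a * x * b = 0) → a = 0 ∨ b = 0)
    (hBprime : ∀ a b : B, (∀ x : B, a * x * b = 0) → a = 0 ∨ b = 0)
    (hBcenter : ∀ b : B, (∀ x : B, b * x = x * b) → ∃ c : ℂ, b = c • (1 : B))
    (hAproj : ∃ p : A, p ≠ 0 ∧ p ≠ 1 ∧ star p = p ∧ p * p = p)
    (hBproj : ∃ q : B, q ≠ 0 ∧ q ≠ 1 ∧ star q = q ∧ q * q = q)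
    (Φ : A → B) (hΦ : Function.Bijective Φ) :
    (∀ a b : A, Φ (a * b + b * star a) = Φ a * Φ b + Φ b * star (Φ a)) ↔
      ((∀ a b : A, Φ (a + b) = Φ a + Φ b) ∧
       (∀ a b : A, Φ (a * b) = Φ a * Φ b) ∧
       (∀ a : A, Φ (star a) = star (Φ a))) := by
  refine ⟨fun H => ?_, fun ⟨hadd, hmul, hstar⟩ a b => by rw [hadd, hmul, hmul, hstar]⟩
  have : IsAddTorsionFree A := .of_isTorsionFree ℂ A
  obtain ⟨p, hp0, hp1, hps, hpp⟩ := hAproj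
  obtain ⟨q, hq0, hq1, hqs, hqq⟩ := hBproj
  have hadd := PreservesJordanStarProduct.map_add_of_bijective H hΦ
    (p := p) (q := 1 - p) ⟨⟨hpp, hps⟩, add_sub_cancel p 1⟩ hAprime hp0 (sub_ne_zero.2 hp1.symm)
  have hf : PreservesJordanStarProduct (AddMonoidHom.mk' Φ hadd) := H
  have h1 := hf.map_one_eq_one hΦ.2 hBprime hBcenter hq0 hq1 hqq
  obtain ⟨δ, hδ0, hδc, hI⟩ := hf.exists_map_I_smul h1 hΦ.2 hBprime hBcenter hq0 hq1 hqs hqq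
  exact ⟨hadd, hf.map_mul_of_map_I_smul hδ0 hδc hI, hf.map_star_of_map_one h1⟩

/-- On unital prime complex *-algebras with center ℂ·1 and a nontrivial
projection, a bijection Φ satisfies Φ(ab + ba*) = Φ(a)Φ(b) + Φ(b)Φ(a)* for all a, b
iff Φ is a *-ring isomorphism (additive, multiplicative, star-preserving). -/
theorem stmt_0 {A B : Type*}
    [Ring A] [Algebra ℂ A] [StarRing A] [StarModule ℂ A]
    [Ring B] [Algebra ℂ B] [StarRing B] [StarModule ℂ B]
    (hAprime : ∀ a b : A, (∀ x : A, a * x * b = 0) → a = 0 ∨ b = 0)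
    (hBprime : ∀ a b : B, (∀ x : B, a * x * b = 0) → a = 0 ∨ b = 0)
    (hAcenter : ∀ a : A, (∀ x : A, a * x = x * a) → ∃ c : ℂ, a = c • (1 : A))
    (hBcenter : ∀ b : B, (∀ x : B, b * x = x * b) → ∃ c : ℂ, b = c • (1 : B))
    (hAproj : ∃ p : A, p ≠ 0 ∧ p ≠ 1 ∧ star p = p ∧ p * p = p)
    (hBproj : ∃ q : B, q ≠ 0 ∧ q ≠ 1 ∧ star q = q ∧ q * q = q)
    (Φ : A → B) (hΦ : Function.Bijective Φ) :
    (∀ a b : A, Φ (a * b + b * star a) = Φ a * Φ b + Φ b * star (Φ a)) ↔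
      ((∀ a b : A, Φ (a + b) = Φ a + Φ b) ∧
       (∀ a b : A, Φ (a * b) = Φ a * Φ b) ∧
       (∀ a : A, Φ (star a) = star (Φ a))) :=
  stmt_0_general hAprime hBprime hBcenter hAproj hBproj Φ hΦ
end

section
/- Let A and B be unital prime complex *-algebras whose centers equal ℂ·1 and which each contain a nontrivial projection. Then a bijective mapping Φ : A → B satisfies Φ(ab − ba*) = Φ(a)Φ(b) − Φ(b)Φ(a)* for all elements a, b ∈ A if and only if Φ is a *-ring isomorphism. -/
/-!
Write `δ(a, b) = a b - b a*`. Since `Φ ∘ δ = δ ∘ Φ`, whenever `Φ t = Φ u + Φ v` every word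
`W` in the maps `δ(y, ·)`, `δ(·, y)` satisfies `Φ (W t) = Φ (W u) + Φ (W v)`; if `Φ` is additive
on `W u, W v` (e.g. if `W u = 0`), injectivity gives `W (t - u - v) = 0`. Fix a nontrivial
projection `e` and `f = 1 - e`. Choosing words adapted to the Peirce decomposition and using
primeness, the defect `t - u - v` vanishes for `u ∈ eAe`, `e v e = 0`; it is self-adjoint for
`u ∈ eAf`, `v ∈ fAe`, and a comparison with the pair `(2i u, 2i v)` kills it; additivity inside
`eAf` follows by expanding `δ(e + e y f, e x f + f)`, and inside `eAe` from that. Once `Φ` is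
additive, `Φ 1` is central and `j = Φ(i 1)` satisfies `j* = -j`, which forces `Φ 1 = 1`, then
`j² = -1` and `Φ (i b) = j Φ b = Φ b j`. Finally `δ(i a, b) = i (a b + b a*)` together with
`δ(a, b)` gives `Φ (a b) = Φ a Φ b`, and `δ(a, 1) = a - a*` gives `Φ a* = (Φ a)*`.
-/

open Complex

namespace StarLie
variable {R S : Type*}

def IsPrimeRing (R : Type*) [Mul R] [Zero R] : Prop :=
  ∀ a b : R, (∀ x : R, a * x * b = 0) → a = 0 ∨ b = 0

lemma eq_zero_of_add_self_eq_zero {M : Type*} [AddCommGroup M] [Module ℂ M] {x : M}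
    (h : x + x = 0) : x = 0 := by
  rwa [← two_smul ℂ, smul_eq_zero, or_iff_right two_ne_zero] at h

section StarRing
variable [Ring R] [StarRing R]

def starLie (a b : R) : R := a * b - b * star a

lemma starLie_add_left (a a' b : R) : starLie (a + a') b = starLie a b + starLie a' b := by
  simp only [starLie, star_add, mul_add, add_mul]; abel

lemma starLie_add_right (a b b' : R) : starLie a (b + b') = starLie a b + starLie a b' := by
  simp only [starLie, mul_add, add_mul]; abel

@[simps]
def starLieLeft (a : R) : R →+ R where
  toFun := starLie a
  map_zero' := by simp [starLie]
  map_add' := starLie_add_right a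

@[simps]
def starLieRight (b : R) : R →+ R where
  toFun a := starLie a b
  map_zero' := by simp [starLie]
  map_add' a a' := starLie_add_left a a' b

structure IsProjPair (e f : R) : Prop where
  add_eq_one : e + f = 1
  mul_self : e * e = e
  star_eq : star e = e
  ne_zero_left : e ≠ 0
  ne_zero_right : f ≠ 0

namespace IsProjPair
variable {e f : R} (P : IsProjPair e f)
include P

lemma eq_one_sub : f = 1 - e := eq_sub_of_add_eq' P.add_eq_one

lemma mul_left_right : e * f = 0 := by rw [P.eq_one_sub, mul_sub, mul_one, P.mul_self, sub_self]

lemma mul_right_left : f * e = 0 := by rw [P.eq_one_sub, sub_mul, one_mul, P.mul_self, sub_self]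

lemma right_mul_self : f * f = f := by
  rw [P.eq_one_sub, sub_mul, one_mul, mul_sub, mul_one, P.mul_self, sub_self, sub_zero]

lemma star_right : star f = f := by rw [P.eq_one_sub, star_sub, star_one, P.star_eq]

-- Bundled as one conjunction so that `simp [P.rules]` can compute in the Peirce corners.
lemma rules : e * e = e ∧ f * f = f ∧ e * f = 0 ∧ f * e = 0 ∧ star e = e ∧ star f = f ∧
    (∀ x, e * (e * x) = e * x) ∧ (∀ x, f * (f * x) = f * x) ∧
    (∀ x, e * (f * x) = 0) ∧ (∀ x, f * (e * x) = 0) := by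
  refine ⟨P.mul_self, P.right_mul_self, P.mul_left_right, P.mul_right_left, P.star_eq,
    P.star_right, fun x => ?_, fun x => ?_, fun x => ?_, fun x => ?_⟩ <;>
    simp only [← mul_assoc, P.mul_self, P.right_mul_self, P.mul_left_right, P.mul_right_left,
      zero_mul]

lemma symm : IsProjPair f e where
  add_eq_one := by rw [add_comm, P.add_eq_one]
  mul_self := P.right_mul_self
  star_eq := P.star_right
  ne_zero_left := P.ne_zero_right
  ne_zero_right := P.ne_zero_left

lemma peirce_decomp (x : R) : x = e * x * e + e * x * f + f * x * e + f * x * f := by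
  have : x = (e + f) * x * (e + f) := by rw [P.add_eq_one, one_mul, mul_one]
  conv_lhs => rw [this]
  simp only [add_mul, mul_add]; abel

end IsProjPair
end StarRing

section Intertwines
variable [AddGroup R] [AddGroup S] {Φ : R → S} {W W₁ W₂ : R →+ R}

def Intertwines (Φ : R → S) (W : R →+ R) : Prop :=
  ∃ W' : S →+ S, ∀ x, Φ (W x) = W' (Φ x)

lemma Intertwines.comp (h₁ : Intertwines Φ W₁) (h₂ : Intertwines Φ W₂) :
    Intertwines Φ (W₁.comp W₂) := by
  obtain ⟨W₁', h₁⟩ := h₁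
  obtain ⟨W₂', h₂⟩ := h₂
  exact ⟨W₁'.comp W₂', fun x => by simp [h₁, h₂]⟩

lemma Intertwines.map_apply_eq_add (hW : Intertwines Φ W) {t u v : R}
    (ht : Φ t = Φ u + Φ v) : Φ (W t) = Φ (W u) + Φ (W v) := by
  obtain ⟨W', hW'⟩ := hW
  rw [hW', hW', hW', ht, map_add]

lemma Intertwines.apply_sub_add_eq_zero (hW : Intertwines Φ W) (hinj : Function.Injective Φ)
    {t u v : R} (ht : Φ t = Φ u + Φ v) (h : Φ (W u + W v) = Φ (W u) + Φ (W v)) :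
    W (t - (u + v)) = 0 := by
  rw [map_sub, sub_eq_zero, map_add]
  exact hinj ((hW.map_apply_eq_add ht).trans h.symm)

lemma Intertwines.apply_sub_add_eq_zero_of_left (hW : Intertwines Φ W)
    (hinj : Function.Injective Φ) (hΦ0 : Φ 0 = 0) {t u v : R} (ht : Φ t = Φ u + Φ v)
    (hu : W u = 0) : W (t - (u + v)) = 0 :=
  hW.apply_sub_add_eq_zero hinj ht (by rw [hu, zero_add, hΦ0, zero_add])

lemma Intertwines.apply_sub_add_eq_zero_of_right (hW : Intertwines Φ W)
    (hinj : Function.Injective Φ) (hΦ0 : Φ 0 = 0) {t u v : R} (ht : Φ t = Φ u + Φ v)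
    (hv : W v = 0) : W (t - (u + v)) = 0 :=
  hW.apply_sub_add_eq_zero hinj ht (by rw [hv, add_zero, hΦ0, add_zero])

end Intertwines

section MapStarLie
variable [Ring R] [StarRing R] [Ring S] [StarRing S] {Φ : R → S}
  (hδ : ∀ a b, Φ (starLie a b) = starLie (Φ a) (Φ b))
include hδ

lemma intertwines_starLieLeft (a : R) : Intertwines Φ (starLieLeft a) :=
  ⟨starLieLeft (Φ a), hδ a⟩

lemma intertwines_starLieRight (b : R) : Intertwines Φ (starLieRight b) :=
  ⟨starLieRight (Φ b), fun a => hδ a b⟩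

lemma map_zero_of_map_starLie (hsurj : Function.Surjective Φ) : Φ 0 = 0 := by
  obtain ⟨z, hz⟩ := hsurj 0
  calc Φ 0 = Φ (starLie 0 z) := by simp [starLie]
    _ = 0 := by rw [hδ, hz]; simp [starLie]

variable {e f : R} in
lemma isSelfAdjoint_sub_eRf_add_fRe (hinj : Function.Injective Φ) (hΦ0 : Φ 0 = 0)
    (P : IsProjPair e f) {t : R} (a b : R)
    (ht : Φ t = Φ (e * a * f) + Φ (f * b * e)) :
    IsSelfAdjoint (t - (e * a * f + f * b * e)) := by
  set c := t - (e * a * f + f * b * e)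
  have hce : starLie c e = 0 := (intertwines_starLieRight hδ e).apply_sub_add_eq_zero_of_left
    hinj hΦ0 ht (by simp [starLie, mul_assoc, P.rules])
  have hcf : starLie c f = 0 := (intertwines_starLieRight hδ f).apply_sub_add_eq_zero_of_right
    hinj hΦ0 ht (by simp [starLie, mul_assoc, P.rules])
  rw [starLie, sub_eq_zero] at hce hcf
  calc star c = (e + f) * star c := by rw [P.add_eq_one, one_mul]
    _ = c * (e + f) := by rw [add_mul, mul_add, hce, hcf]
    _ = c := by rw [P.add_eq_one, mul_one]

end MapStarLie

section ComplexStarAlgebra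
variable [Ring R] [Algebra ℂ R] [StarRing R] [StarModule ℂ R]

lemma starLie_I_smul (a b : R) : starLie (I • a) b = I • (a * b + b * star a) := by
  simp [starLie, star_smul, smul_add, sub_eq_add_neg]

lemma starLie_I_smul_one (b : R) : starLie (I • (1 : R)) b = (2 * I) • b := by
  rw [starLie_I_smul, star_one, one_mul, mul_one, mul_comm, mul_smul, two_smul]

lemma eq_zero_of_isSelfAdjoint_I_smul {c : R} (hc : IsSelfAdjoint c)
    (hIc : IsSelfAdjoint (I • c)) : c = 0 := by
  have h := hIc.star_eq
  rw [star_smul, hc.star_eq, Complex.star_def, conj_I, neg_smul, neg_eq_iff_add_eq_zero] at h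
  exact (smul_eq_zero.mp (eq_zero_of_add_self_eq_zero h)).resolve_left I_ne_zero

lemma mul_eq_zero_of_starLie_eq_zero {a c : R} (h : starLie a c = 0)
    (hI : starLie (I • a) c = 0) : a * c = 0 ∧ c * star a = 0 := by
  rw [starLie_I_smul, smul_eq_zero, or_iff_right I_ne_zero] at hI
  rw [starLie, sub_eq_zero] at h
  rw [h] at hI ⊢
  have := eq_zero_of_add_self_eq_zero hI
  exact ⟨this, this⟩

variable {e f : R}

lemma IsProjPair.mul_eq_zero_of_forall_starLie_eq_zero
    (hprime : IsPrimeRing R) (P : IsProjPair e f) {c : R}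
    (h : ∀ z, starLie (e * z * f) c = 0) : f * c = 0 ∧ c * f = 0 := by
  have hz (z : R) : e * z * f * c = 0 ∧ c * (f * star z * e) = 0 := by
    have hI : starLie (I • (e * z * f)) c = 0 := by
      simpa [mul_smul_comm, smul_mul_assoc] using h (I • z)
    simpa [mul_assoc, P.rules] using mul_eq_zero_of_starLie_eq_zero (h z) hI
  constructor
  · refine (hprime e (f * c) fun z => ?_).resolve_left P.ne_zero_left
    simpa [mul_assoc] using (hz z).1
  · refine (hprime (c * f) e fun z => ?_).resolve_right P.ne_zero_left
    simpa [mul_assoc] using (hz (star z)).2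

lemma IsProjPair.eq_zero_of_starLie_eq_zero
    (hprime : IsPrimeRing R) (P : IsProjPair e f) {c : R}
    (h₁ : starLie f c = 0) (h₂ : starLie (I • f) c = 0)
    (h : ∀ x y, starLie (f * y * e) (starLie (f * x * e) c) = 0) : c = 0 := by
  obtain ⟨hfc, hcf⟩ := mul_eq_zero_of_starLie_eq_zero h₁ h₂
  rw [P.star_right] at hcf
  have hec : ∀ z, e * (c * z) = c * z := fun z => by
    rw [P.symm.eq_one_sub, ← mul_assoc, sub_mul, one_mul, hfc, sub_zero]
  have hcezf : ∀ x, c * e * x * f = 0 := fun x => by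
    have := (P.symm.mul_eq_zero_of_forall_starLie_eq_zero hprime (h (star x))).1
    simpa [starLie, mul_assoc, P.rules, hec, mul_sub] using this
  have hce : c * e = 0 := (hprime _ _ hcezf).resolve_right P.ne_zero_right
  calc c = c * (e + f) := by rw [P.add_eq_one, mul_one]
    _ = 0 := by rw [mul_add, hce, hcf, add_zero]

end ComplexStarAlgebra

section Additivity
variable [Ring R] [Algebra ℂ R] [StarRing R] [StarModule ℂ R] [Ring S] [StarRing S]
  {Φ : R → S} {e f : R}

lemma map_eRe_add (hΦ : Function.Bijective Φ)
    (hδ : ∀ a b, Φ (starLie a b) = starLie (Φ a) (Φ b))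
    (hprime : IsPrimeRing R) (P : IsProjPair e f)
    (a w : R) (hw : e * w * e = 0) : Φ (e * a * e + w) = Φ (e * a * e) + Φ w := by
  have hΦ0 := map_zero_of_map_starLie hδ hΦ.2
  have hw' : ∀ z, e * (w * (e * z)) = 0 := fun z => by
    rw [← mul_assoc, ← mul_assoc, hw, zero_mul]
  obtain ⟨t, ht⟩ := hΦ.2 (Φ (e * a * e) + Φ w)
  have hdiag (g : R) (hg : g = f ∨ g = I • f) : starLie g (t - (e * a * e + w)) = 0 :=
    (intertwines_starLieLeft hδ g).apply_sub_add_eq_zero_of_left hΦ.1 hΦ0 ht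
      (by rcases hg with rfl | rfl <;> simp [starLie, mul_assoc, P.rules])
  have hword (x y : R) :=
    (intertwines_starLieLeft hδ (f * y * e)).comp (intertwines_starLieLeft hδ (f * x * e))
  have hc := P.eq_zero_of_starLie_eq_zero hprime (hdiag f (.inl rfl)) (hdiag _ (.inr rfl))
    fun x y => (hword x y).apply_sub_add_eq_zero_of_right hΦ.1 hΦ0 ht
      (by simp [starLie, mul_assoc, mul_sub, sub_mul, P.rules, hw'])
  rw [← ht, sub_eq_zero.mp hc]

lemma map_eRf_add_fRe (hΦ : Function.Bijective Φ)
    (hδ : ∀ a b, Φ (starLie a b) = starLie (Φ a) (Φ b)) (P : IsProjPair e f) (a b : R) :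
    Φ (e * a * f + f * b * e) = Φ (e * a * f) + Φ (f * b * e) := by
  have hΦ0 := map_zero_of_map_starLie hδ hΦ.2
  obtain ⟨t, ht⟩ := hΦ.2 (Φ (e * a * f) + Φ (f * b * e))
  obtain ⟨t', ht'⟩ := hΦ.2 (Φ (e * ((2 * I) • a) * f) + Φ (f * ((2 * I) • b) * e))
  have htt' : (2 * I) • t = t' := hΦ.1 <| by
    simpa only [starLieLeft_apply, starLie_I_smul_one, ht', mul_smul_comm, smul_mul_assoc] using
      (intertwines_starLieLeft hδ (I • 1)).map_apply_eq_add ht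
  have hc := isSelfAdjoint_sub_eRf_add_fRe hδ hΦ.1 hΦ0 P a b ht
  have hc' := isSelfAdjoint_sub_eRf_add_fRe hδ hΦ.1 hΦ0 P _ _ ht'
  -- the defect of `(2i a, 2i b)` is `2i` times the defect of `(a, b)`, and both are self-adjoint
  rw [← htt', mul_smul_comm, smul_mul_assoc, mul_smul_comm, smul_mul_assoc, ← smul_add,
    ← smul_sub, mul_comm, mul_smul, two_smul] at hc'
  have := eq_zero_of_add_self_eq_zero (eq_zero_of_isSelfAdjoint_I_smul (hc.add hc) hc')
  rw [← ht, sub_eq_zero.mp this]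

lemma map_add_eRf (hΦ : Function.Bijective Φ)
    (hδ : ∀ a b, Φ (starLie a b) = starLie (Φ a) (Φ b))
    (hprime : IsPrimeRing R) (P : IsProjPair e f)
    (x y : R) : Φ (e * x * f + e * y * f) = Φ (e * x * f) + Φ (e * y * f) := by
  have hΦ0 := map_zero_of_map_starLie hδ hΦ.2
  have hoff := map_eRf_add_fRe hΦ hδ P
  have hcorner := map_eRe_add hΦ hδ hprime P
  have h₁ : Φ (e + e * y * f) = Φ e + Φ (e * y * f) := by
    simpa [P.rules] using hcorner 1 (e * y * f) (by simp [mul_assoc, P.rules])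
  have h₂ : Φ (e * x * f + f) = Φ (e * x * f) + Φ f := by
    rw [add_comm, add_comm (Φ _)]
    simpa [P.rules] using
      map_eRe_add hΦ hδ hprime P.symm 1 (e * x * f) (by simp [mul_assoc, P.rules])
  -- expand `Φ (δ(e + e y f, e x f + f))` in two ways
  have hid : starLie (e + e * y * f) (e * x * f + f) =
      e * (-(x * f * star y)) * e + (e * (x + y) * f + f * (-star y) * e) := by
    simp [starLie, mul_assoc, mul_add, add_mul, P.rules]
    abel
  have hlhs : Φ (starLie (e + e * y * f) (e * x * f + f)) = Φ (e * (-(x * f * star y)) * e) +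
      (Φ (e * x * f + e * y * f) + Φ (f * (-star y) * e)) := by
    rw [hid, hcorner _ _ (by simp [mul_assoc, mul_add, add_mul, P.rules]), hoff, mul_add,
      add_mul]
  have hrhs : Φ (starLie (e + e * y * f) (e * x * f + f)) = Φ (e * x * f) +
      (Φ (e * (-(x * f * star y)) * e) + (Φ (e * y * f) + Φ (f * (-star y) * e))) := by
    have h₃ : starLie e (e * x * f) = e * x * f := by simp [starLie, mul_assoc, P.rules]
    have h₄ : starLie e f = 0 := by simp [starLie, P.rules]
    have h₅ : starLie (e * y * f) (e * x * f) = e * (-(x * f * star y)) * e := by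
      simp [starLie, mul_assoc, P.rules]
    have h₆ : starLie (e * y * f) f = e * y * f + f * (-star y) * e := by
      simp [starLie, mul_assoc, P.rules, sub_eq_add_neg]
    rw [hδ, h₁, h₂, starLie_add_left, starLie_add_right, starLie_add_right, ← hδ, ← hδ, ← hδ,
      ← hδ, h₃, h₄, h₅, h₆, hoff, hΦ0, add_zero]
  calc Φ (e * x * f + e * y * f)
      = Φ (e * (-(x * f * star y)) * e) + (Φ (e * x * f + e * y * f) + Φ (f * (-star y) * e))
        - Φ (e * (-(x * f * star y)) * e) - Φ (f * (-star y) * e) := by abel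
    _ = Φ (e * x * f) + Φ (e * y * f) := by rw [← hlhs, hrhs]; abel

lemma map_add_eRe (hΦ : Function.Bijective Φ)
    (hδ : ∀ a b, Φ (starLie a b) = starLie (Φ a) (Φ b))
    (hprime : IsPrimeRing R) (P : IsProjPair e f)
    (x y : R) : Φ (e * x * e + e * y * e) = Φ (e * x * e) + Φ (e * y * e) := by
  have hΦ0 := map_zero_of_map_starLie hδ hΦ.2
  obtain ⟨t, ht⟩ := hΦ.2 (Φ (e * x * e) + Φ (e * y * e))
  obtain ⟨hfc, hcf⟩ := P.mul_eq_zero_of_forall_starLie_eq_zero hprime fun z =>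
    (intertwines_starLieLeft hδ (e * z * f)).apply_sub_add_eq_zero_of_left hΦ.1 hΦ0 ht
      (by simp [starLie, mul_assoc, P.rules])
  set c := t - (e * x * e + e * y * e)
  have hcezf (z : R) : c * e * z * f = 0 := by
    have hz : starLie c (e * z * f) = 0 :=
      (intertwines_starLieRight hδ (e * z * f)).apply_sub_add_eq_zero hΦ.1 ht <| by
        have hx : starLie (e * x * e) (e * z * f) = e * (x * e * z) * f := by
          simp [starLie, mul_assoc, P.rules]
        have hy : starLie (e * y * e) (e * z * f) = e * (y * e * z) * f := by
          simp [starLie, mul_assoc, P.rules]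
        simpa only [starLieRight_apply, hx, hy] using
          map_add_eRf hΦ hδ hprime P (x * e * z) (y * e * z)
    have hfc' : f * star c = 0 := by rw [← P.star_right, ← star_mul, hcf, star_zero]
    simpa [starLie, mul_assoc, hfc'] using hz
  have hce : c * e = 0 := (hprime _ _ hcezf).resolve_right P.ne_zero_right
  have hc : c = 0 := by
    calc c = c * (e + f) := by rw [P.add_eq_one, mul_one]
      _ = 0 := by rw [mul_add, hce, hcf, add_zero]
  rw [← ht, sub_eq_zero.mp hc]

lemma map_eq_sum_corners (hΦ : Function.Bijective Φ)
    (hδ : ∀ a b, Φ (starLie a b) = starLie (Φ a) (Φ b))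
    (hprime : IsPrimeRing R) (P : IsProjPair e f)
    (x : R) : Φ x = Φ (e * x * e) + Φ (e * x * f) + Φ (f * x * e) + Φ (f * x * f) := by
  have h₁ := map_eRe_add hΦ hδ hprime P x (e * x * f + f * x * e + f * x * f)
    (by simp [mul_assoc, mul_add, P.rules])
  have h₂ := map_eRe_add hΦ hδ hprime P.symm x (e * x * f + f * x * e)
    (by simp [mul_assoc, mul_add, P.rules])
  have hx : x = e * x * e + (e * x * f + f * x * e + f * x * f) :=
    (P.peirce_decomp x).trans (by abel)
  rw [add_comm] at h₂
  conv_lhs => rw [hx, h₁, h₂, map_eRf_add_fRe hΦ hδ P]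
  abel

theorem map_add_of_map_starLie (hΦ : Function.Bijective Φ)
    (hδ : ∀ a b, Φ (starLie a b) = starLie (Φ a) (Φ b))
    (hprime : IsPrimeRing R) (P : IsProjPair e f)
    (a b : R) : Φ (a + b) = Φ a + Φ b := by
  rw [map_eq_sum_corners hΦ hδ hprime P (a + b), map_eq_sum_corners hΦ hδ hprime P a,
    map_eq_sum_corners hΦ hδ hprime P b]
  simp only [mul_add, add_mul, map_add_eRe hΦ hδ hprime P, map_add_eRe hΦ hδ hprime P.symm,
    map_add_eRf hΦ hδ hprime P, map_add_eRf hΦ hδ hprime P.symm]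
  abel

end Additivity

section MapOne
variable [Ring R] [StarRing R] [Ring S] [StarRing S] {Φ : R →+ S}
  (hδ : ∀ a b, Φ (starLie a b) = starLie (Φ a) (Φ b)) (hsurj : Function.Surjective Φ)
include hδ hsurj

lemma map_one_mul_eq_mul_star (y : S) :
    Φ 1 * y = y * star (Φ 1) := by
  obtain ⟨b, rfl⟩ := hsurj y
  have h := hδ 1 b
  rwa [starLie, star_one, one_mul, mul_one, sub_self, map_zero, eq_comm, starLie,
    sub_eq_zero] at h

lemma star_map_one : star (Φ 1) = Φ 1 := by
  simpa using (map_one_mul_eq_mul_star hδ hsurj 1).symm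

lemma map_one_mul_comm (y : S) : Φ 1 * y = y * Φ 1 := by
  rw [map_one_mul_eq_mul_star hδ hsurj, star_map_one hδ hsurj]

lemma map_sub_map_star (a : R) :
    Φ a - Φ (star a) = Φ 1 * (Φ a - star (Φ a)) := by
  have h := hδ a 1
  rw [starLie, starLie, one_mul, mul_one, map_sub] at h
  rw [h, mul_sub, map_one_mul_comm hδ hsurj (Φ a)]

end MapOne

section Multiplicativity
variable [Ring R] [Algebra ℂ R] [StarRing R] [StarModule ℂ R] [Ring S] [StarRing S]
  [Module ℂ S] {Φ : R →+ S} (hδ : ∀ a b, Φ (starLie a b) = starLie (Φ a) (Φ b))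
  (hsurj : Function.Surjective Φ)
include hδ hsurj

lemma star_map_I_smul_one :
    star (Φ (I • 1)) = -Φ (I • 1) := by
  set j := Φ (I • 1)
  have h₁ : j + j = Φ 1 * (j - star j) := by
    simpa [star_smul, sub_eq_add_neg] using map_sub_map_star hδ hsurj (I • 1)
  have h₂ : star j + star j = Φ 1 * (star j - j) := by
    have := congrArg star h₁
    rwa [star_add, star_mul, star_map_one hδ hsurj, ← map_one_mul_comm hδ hsurj, star_sub,
      star_star] at this
  have h₃ : (j + star j) + (j + star j) = 0 := by
    calc (j + star j) + (j + star j) = (j + j) + (star j + star j) := by abel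
      _ = 0 := by rw [h₁, h₂, ← mul_add]; simp
  exact eq_neg_of_add_eq_zero_right (eq_zero_of_add_self_eq_zero h₃)

lemma map_I_smul_add_self (b : R) :
    Φ (I • b) + Φ (I • b) = Φ (I • 1) * Φ b + Φ b * Φ (I • 1) := by
  have h := hδ (I • 1) b
  rwa [starLie_I_smul_one, starLie, star_map_I_smul_one hδ hsurj, mul_neg, sub_neg_eq_add,
    mul_comm, mul_smul, two_smul, smul_add, map_add] at h

lemma map_one_eq_one : Φ 1 = 1 := by
  set j := Φ (I • 1)
  -- `1 - Φ 1` is central and kills `j`, hence kills every `Φ (I • b)`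
  have hj : (1 - Φ 1) * j = 0 := by
    have h := map_sub_map_star hδ hsurj (I • (1 : R))
    rw [star_smul, star_one, star_map_I_smul_one hδ hsurj, Complex.star_def, conj_I, neg_smul,
      map_neg, sub_neg_eq_add, ← sub_eq_zero, ← one_sub_mul, mul_add] at h
    exact eq_zero_of_add_self_eq_zero h
  have hcomm (y : S) : (1 - Φ 1) * y = y * (1 - Φ 1) := by
    rw [sub_mul, mul_sub, one_mul, mul_one, map_one_mul_comm hδ hsurj]
  have hker (b : R) : (1 - Φ 1) * Φ (I • b) = 0 := by
    refine eq_zero_of_add_self_eq_zero ?_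
    rw [← mul_add, map_I_smul_add_self hδ hsurj, mul_add, ← mul_assoc, hj, zero_mul, hcomm,
      mul_assoc, ← hcomm, hj, mul_zero, add_zero]
  obtain ⟨x, hx⟩ := hsurj 1
  have h1 := hker (-(I • x))
  rw [smul_neg, smul_smul, I_mul_I, neg_one_smul, neg_neg, hx, mul_one, sub_eq_zero] at h1
  exact h1.symm

lemma map_star_eq (a : R) : Φ (star a) = star (Φ a) := by
  simpa [map_one_eq_one hδ hsurj] using map_sub_map_star hδ hsurj a

lemma map_I_smul_one_mul_self : Φ (I • 1) * Φ (I • 1) = -1 := by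
  have h := map_I_smul_add_self hδ hsurj (I • 1)
  rw [smul_smul, I_mul_I, neg_one_smul, map_neg, map_one_eq_one hδ hsurj] at h
  have h' : (Φ (I • 1) * Φ (I • 1) + 1) + (Φ (I • 1) * Φ (I • 1) + 1) = 0 := by
    calc _ = (Φ (I • 1) * Φ (I • 1) + Φ (I • 1) * Φ (I • 1)) - (-1 + -1) := by abel
      _ = 0 := by rw [← h, sub_self]
  exact eq_neg_of_add_eq_zero_left (eq_zero_of_add_self_eq_zero h')

lemma map_I_smul_eq_mul (b : R) :
    Φ (I • b) = Φ (I • 1) * Φ b ∧ Φ (I • b) = Φ b * Φ (I • 1) := by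
  set j := Φ (I • 1)
  set k := Φ (I • b)
  have hjj : j * j = -1 := map_I_smul_one_mul_self hδ hsurj
  have hk : k + k = j * Φ b + Φ b * j := map_I_smul_add_self hδ hsurj b
  have hIk : -Φ b + -Φ b = j * k + k * j := by
    simpa [smul_smul] using map_I_smul_add_self hδ hsurj (I • b)
  have hjk : j * k = k * j := by
    refine sub_eq_zero.mp (eq_zero_of_add_self_eq_zero ?_)
    calc (j * k - k * j) + (j * k - k * j) = j * (k + k) - (k + k) * j := by noncomm_ring
      _ = (j * j) * Φ b - Φ b * (j * j) := by rw [hk]; noncomm_ring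
      _ = 0 := by rw [hjj]; simp
  have hb : -Φ b = j * k := by
    refine neg_eq_of_add_eq_zero_left (eq_zero_of_add_self_eq_zero ?_)
    calc (j * k + Φ b) + (j * k + Φ b) = (j * k + k * j) - (-Φ b + -Φ b) := by
          rw [← hjk]; abel
      _ = 0 := by rw [← hIk, sub_self]
  have hk' : k = -((j * j) * k) := by rw [hjj]; simp
  constructor
  · rw [hk', ← neg_neg (Φ b), hb]; noncomm_ring
  · rw [hk', ← neg_neg (Φ b), hb, neg_mul, mul_assoc j k j, ← hjk, ← mul_assoc]

lemma map_mul_eq (a b : R) : Φ (a * b) = Φ a * Φ b := by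
  set j := Φ (I • 1)
  have hjj : j * j = -1 := map_I_smul_one_mul_self hδ hsurj
  have hjc (y : S) : j * y = y * j := by
    obtain ⟨x, rfl⟩ := hsurj y
    exact (map_I_smul_eq_mul hδ hsurj x).1.symm.trans (map_I_smul_eq_mul hδ hsurj x).2
  have hcancel {x y : S} (h : j * x = j * y) : x = y := by
    simpa [← mul_assoc, hjj] using congrArg (j * ·) h
  have hsum : Φ (a * b) + Φ (b * star a) = Φ a * Φ b + Φ b * star (Φ a) := by
    refine hcancel ?_
    calc j * (Φ (a * b) + Φ (b * star a)) = starLie (j * Φ a) (Φ b) := by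
          rw [← map_add, ← (map_I_smul_eq_mul hδ hsurj _).1, ← starLie_I_smul, hδ,
            (map_I_smul_eq_mul hδ hsurj a).1]
      _ = j * (Φ a * Φ b) + Φ b * star (Φ a) * j := by
          rw [starLie, star_mul, star_map_I_smul_one hδ hsurj]; noncomm_ring
      _ = j * (Φ a * Φ b + Φ b * star (Φ a)) := by rw [← hjc, mul_add]
  have hdiff : Φ (a * b) - Φ (b * star a) = Φ a * Φ b - Φ b * star (Φ a) := by
    rw [← map_sub]; exact hδ a b
  refine sub_eq_zero.mp (eq_zero_of_add_self_eq_zero ?_)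
  calc (Φ (a * b) - Φ a * Φ b) + (Φ (a * b) - Φ a * Φ b)
      = (Φ (a * b) + Φ (b * star a)) + (Φ (a * b) - Φ (b * star a))
        - (Φ a * Φ b + Φ b * star (Φ a)) - (Φ a * Φ b - Φ b * star (Φ a)) := by abel
    _ = 0 := by rw [hsum, hdiff]; abel

end Multiplicativity
end StarLie

open StarLie

theorem stmt_1_general {A B : Type*}
    [Ring A] [Algebra ℂ A] [StarRing A] [StarModule ℂ A]
    [Ring B] [Algebra ℂ B] [StarRing B]
    (hAprime : ∀ a b : A, (∀ x : A, a * x * b = 0) → a = 0 ∨ b = 0)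
    (hAproj : ∃ p : A, p ≠ 0 ∧ p ≠ 1 ∧ star p = p ∧ p * p = p)
    (Φ : A → B) (hΦ : Function.Bijective Φ) :
    (∀ a b : A, Φ (a * b - b * star a) = Φ a * Φ b - Φ b * star (Φ a)) ↔
      ((∀ a b : A, Φ (a + b) = Φ a + Φ b) ∧
       (∀ a b : A, Φ (a * b) = Φ a * Φ b) ∧
       (∀ a : A, Φ (star a) = star (Φ a))) := by
  constructor
  · intro hδ
    obtain ⟨p, hp0, hp1, hpstar, hpp⟩ := hAproj
    have P : IsProjPair p (1 - p) :=
      ⟨add_sub_cancel p 1, hpp, hpstar, hp0, sub_ne_zero.mpr hp1.symm⟩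
    have hadd := map_add_of_map_starLie hΦ hδ hAprime P
    let Ψ : A →+ B := AddMonoidHom.mk' Φ hadd
    exact ⟨hadd, map_mul_eq (Φ := Ψ) hδ hΦ.2, map_star_eq (Φ := Ψ) hδ hΦ.2⟩
  · rintro ⟨hadd, hmul, hstar⟩ a b
    rw [← hstar, ← hmul, ← hmul]
    exact (AddMonoidHom.mk' Φ hadd).map_sub _ _

/-- On unital prime complex *-algebras with center ℂ·1 and a nontrivial
projection, a bijection Φ satisfies Φ(ab − ba*) = Φ(a)Φ(b) − Φ(b)Φ(a)* for all a, b
iff Φ is a *-ring isomorphism. -/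
theorem stmt_1 {A B : Type*}
    [Ring A] [Algebra ℂ A] [StarRing A] [StarModule ℂ A]
    [Ring B] [Algebra ℂ B] [StarRing B] [StarModule ℂ B]
    (hAprime : ∀ a b : A, (∀ x : A, a * x * b = 0) → a = 0 ∨ b = 0)
    (hBprime : ∀ a b : B, (∀ x : B, a * x * b = 0) → a = 0 ∨ b = 0)
    (hAcenter : ∀ a : A, (∀ x : A, a * x = x * a) → ∃ c : ℂ, a = c • (1 : A))
    (hBcenter : ∀ b : B, (∀ x : B, b * x = x * b) → ∃ c : ℂ, b = c • (1 : B))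
    (hAproj : ∃ p : A, p ≠ 0 ∧ p ≠ 1 ∧ star p = p ∧ p * p = p)
    (hBproj : ∃ q : B, q ≠ 0 ∧ q ≠ 1 ∧ star q = q ∧ q * q = q)
    (Φ : A → B) (hΦ : Function.Bijective Φ) :
    (∀ a b : A, Φ (a * b - b * star a) = Φ a * Φ b - Φ b * star (Φ a)) ↔
      ((∀ a b : A, Φ (a + b) = Φ a + Φ b) ∧
       (∀ a b : A, Φ (a * b) = Φ a * Φ b) ∧
       (∀ a : A, Φ (star a) = star (Φ a))) :=
  stmt_1_general hAprime hAproj Φ hΦ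
end

section
/- Let A and B be unital prime complex *-algebras whose centers equal ℂ·1 and which each contain a nontrivial projection, and let Φ : A → B be a bijective mapping satisfying Φ(xy + yx*) = Φ(x)Φ(y) + Φ(y)Φ(x)* for all x, y ∈ A. Then Φ(iℝ·1_A) = iℝ·1_B and Φ(ℂ·1_A) = ℂ·1_B; that is, the image under Φ of the set of purely imaginary multiples of the identity of A is exactly the set of purely imaginary multiples of the identity of B, and the image of the set of complex multiples of the identity of A is exactly the set of complex multiples of the identity of B. -/
/-!
Write `x ∘ y = x y + y x*`. A bijection preserving `∘` preserves every property defined by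
`∘` alone, in particular `a ∘ x = 0 for all x` and `a ∘ (x ∘ y) = (a ∘ x) ∘ y for all x, y`.
In a *-algebra with centre `ℂ·1` the first property characterises `iℝ·1`: putting `x = 1`
gives `a* = -a`, after which `a ∘ x = a x - x a`. If it is moreover prime and noncommutative, the
second characterises `ℂ·1`: expanding it shows that `d = a y - y a` satisfies `d x = x* d`,
so `d` annihilates all commutators, and primeness with `d z [u, v] = d [z u, v] - d [z, v] u`
forces `d = 0`. A nontrivial projection rules out commutativity.
-/

open Complex ComplexConjugate

theorem Function.Surjective.image_setOf_eq {α β : Type*} {f : α → β}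
    (hf : Function.Surjective f) {p : α → Prop} {q : β → Prop} (hpq : ∀ a, q (f a) ↔ p a) :
    f '' {a | p a} = {b | q b} := by
  rw [← hf.image_preimage {b | q b}]
  congr 1
  ext a
  exact (hpq a).symm

theorem exists_mul_ne_mul_of_isIdempotentElem {A : Type*} [Ring A] [Algebra ℂ A]
    (hcenter : ∀ a : A, (∀ x : A, a * x = x * a) → ∃ c : ℂ, a = c • (1 : A))
    {p : A} (hp0 : p ≠ 0) (hp1 : p ≠ 1) (hp : IsIdempotentElem p) :
    ∃ u v : A, u * v ≠ v * u := by
  by_contra! hcomm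
  obtain ⟨c, rfl⟩ := hcenter p (hcomm p)
  have hc1 : c - 1 ≠ 0 := by
    rintro hc
    rw [sub_eq_zero.mp hc, one_smul] at hp1
    exact hp1 rfl
  have hc : (c - 1) • c • (1 : A) = 0 := by
    rw [sub_smul, one_smul, sub_eq_zero, smul_smul]
    simpa only [IsIdempotentElem, smul_mul_smul_comm, one_mul] using hp
  exact hp0 ((smul_eq_zero.mp hc).resolve_left hc1)

section JordanStarProduct

variable {A : Type*} [Ring A] [StarRing A]

def jordanStarProd (x y : A) : A := x * y + y * star x

def IsJordanStarAnnihilator (a : A) : Prop := ∀ x, jordanStarProd a x = 0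

def IsJordanStarAssociative (a : A) : Prop :=
  ∀ x y, jordanStarProd a (jordanStarProd x y) = jordanStarProd (jordanStarProd a x) y

section Transfer

variable {B : Type*} [Ring B] [StarRing B] {Φ : A → B}

theorem map_zero_of_map_jordanStarProd (hs : Function.Surjective Φ)
    (h : ∀ x y, Φ (jordanStarProd x y) = jordanStarProd (Φ x) (Φ y)) : Φ 0 = 0 := by
  obtain ⟨z, hz⟩ := hs 0
  simpa [jordanStarProd, hz] using h 0 z

theorem isJordanStarAnnihilator_map_iff (hΦ : Function.Bijective Φ)
    (h : ∀ x y, Φ (jordanStarProd x y) = jordanStarProd (Φ x) (Φ y)) (a : A) :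
    IsJordanStarAnnihilator (Φ a) ↔ IsJordanStarAnnihilator a := by
  have hΦ0 := map_zero_of_map_jordanStarProd hΦ.2 h
  refine ⟨fun ha x => hΦ.1 ?_, fun ha => hΦ.2.forall.2 fun x => ?_⟩
  · rw [h, ha, hΦ0]
  · rw [← h, ha, hΦ0]

theorem isJordanStarAssociative_map_iff (hΦ : Function.Bijective Φ)
    (h : ∀ x y, Φ (jordanStarProd x y) = jordanStarProd (Φ x) (Φ y)) (a : A) :
    IsJordanStarAssociative (Φ a) ↔ IsJordanStarAssociative a := by
  refine ⟨fun ha x y => hΦ.1 ?_, fun ha => hΦ.2.forall₂.2 fun x y => ?_⟩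
  · simpa only [h] using ha (Φ x) (Φ y)
  · simp only [← h]
    rw [ha]

end Transfer

theorem eq_zero_of_forall_mul_eq_star_mul
    (hprime : ∀ a b : A, (∀ x : A, a * x * b = 0) → a = 0 ∨ b = 0)
    {u v : A} (huv : u * v ≠ v * u) {d : A} (hd : ∀ x, d * x = star x * d) : d = 0 := by
  have hcomm : ∀ p q, d * (p * q - q * p) = 0 := fun p q => by
    have : d * (p * q) = d * (q * p) := by
      rw [hd, star_mul, mul_assoc, ← hd, ← mul_assoc, ← hd, mul_assoc]
    rw [mul_sub, this, sub_self]
  have hkill : ∀ z, d * z * (u * v - v * u) = 0 := fun z => by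
    linear_combination (norm := noncomm_ring) hcomm (z * u) v - hcomm z v * u
  exact (hprime d _ hkill).resolve_right (sub_ne_zero.mpr huv)

theorem IsJordanStarAssociative.commutator_mul_eq {a : A} (ha : IsJordanStarAssociative a)
    (x y : A) : (a * y - y * a) * x = star x * (a * y - y * a) := by
  have hxy := ha (star x) y
  have h1y := ha 1 y
  simp only [jordanStarProd, star_add, star_mul, star_star, star_one, one_mul, mul_one]
    at hxy h1y
  linear_combination (norm := noncomm_ring) hxy - star x * h1y

theorem IsJordanStarAssociative.commute
    (hprime : ∀ a b : A, (∀ x : A, a * x * b = 0) → a = 0 ∨ b = 0)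
    (hnc : ∃ u v : A, u * v ≠ v * u) {a : A} (ha : IsJordanStarAssociative a) (y : A) :
    Commute a y := by
  obtain ⟨u, v, huv⟩ := hnc
  exact sub_eq_zero.mp (eq_zero_of_forall_mul_eq_star_mul hprime huv (ha.commutator_mul_eq · y))

end JordanStarProduct

section ComplexStarAlgebra

variable {A : Type*} [Ring A] [Algebra ℂ A] [StarRing A] [StarModule ℂ A]

theorem isJordanStarAssociative_smul_one (c : ℂ) : IsJordanStarAssociative (c • (1 : A)) := by
  intro x y
  simp only [jordanStarProd, star_smul, star_one, smul_mul_assoc, one_mul, mul_smul_comm,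
    mul_one, star_add, star_star, smul_add, add_mul, mul_add]
  module

theorem isJordanStarAnnihilator_smul_one (t : ℝ) :
    IsJordanStarAnnihilator (((t : ℂ) * I) • (1 : A)) := by
  intro x
  simp [jordanStarProd, star_smul, conj_ofReal]

theorem isJordanStarAssociative_iff
    (hprime : ∀ a b : A, (∀ x : A, a * x * b = 0) → a = 0 ∨ b = 0)
    (hcenter : ∀ a : A, (∀ x : A, a * x = x * a) → ∃ c : ℂ, a = c • (1 : A))
    (hnc : ∃ u v : A, u * v ≠ v * u) (a : A) :
    IsJordanStarAssociative a ↔ ∃ c : ℂ, a = c • (1 : A) :=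
  ⟨fun ha => hcenter a (ha.commute hprime hnc),
    fun ⟨c, hac⟩ => hac ▸ isJordanStarAssociative_smul_one c⟩

theorem isJordanStarAnnihilator_iff
    (hcenter : ∀ a : A, (∀ x : A, a * x = x * a) → ∃ c : ℂ, a = c • (1 : A)) (a : A) :
    IsJordanStarAnnihilator a ↔ ∃ t : ℝ, a = ((t : ℂ) * I) • (1 : A) := by
  refine ⟨fun ha => ?_, fun ⟨t, hat⟩ => hat ▸ isJordanStarAnnihilator_smul_one t⟩
  have hskew : star a = -a := by
    simpa only [jordanStarProd, mul_one, one_mul] using eq_neg_of_add_eq_zero_right (ha 1)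
  obtain ⟨c, rfl⟩ := hcenter a fun x => by
    simpa only [jordanStarProd, hskew, mul_neg, ← sub_eq_add_neg, sub_eq_zero] using ha x
  refine ⟨c.im, ?_⟩
  calc c • (1 : A) = (2⁻¹ : ℂ) • (c • 1 - star (c • (1 : A))) := by rw [hskew]; module
    _ = (2⁻¹ * (c - conj c)) • (1 : A) := by
      rw [star_smul, star_one, ← sub_smul, smul_smul]; rfl
    _ = _ := by rw [sub_conj]; congr 1; push_cast; ring

end ComplexStarAlgebra

/-- Lemma 2.5: Φ(iℝ·1_A) = iℝ·1_B and Φ(ℂ·1_A) = ℂ·1_B. -/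
theorem stmt_10 {A B : Type*}
    [Ring A] [Algebra ℂ A] [StarRing A] [StarModule ℂ A]
    [Ring B] [Algebra ℂ B] [StarRing B] [StarModule ℂ B]
    (hAprime : ∀ a b : A, (∀ x : A, a * x * b = 0) → a = 0 ∨ b = 0)
    (hBprime : ∀ a b : B, (∀ x : B, a * x * b = 0) → a = 0 ∨ b = 0)
    (hAcenter : ∀ a : A, (∀ x : A, a * x = x * a) → ∃ c : ℂ, a = c • (1 : A))
    (hBcenter : ∀ b : B, (∀ x : B, b * x = x * b) → ∃ c : ℂ, b = c • (1 : B))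
    (hAproj : ∃ p : A, p ≠ 0 ∧ p ≠ 1 ∧ star p = p ∧ p * p = p)
    (hBproj : ∃ q : B, q ≠ 0 ∧ q ≠ 1 ∧ star q = q ∧ q * q = q)
    (Φ : A → B) (hΦ : Function.Bijective Φ)
    (h : ∀ x y : A, Φ (x * y + y * star x) = Φ x * Φ y + Φ y * star (Φ x)) :
    Φ '' {a : A | ∃ t : ℝ, a = ((t : ℂ) * Complex.I) • (1 : A)} =
      {b : B | ∃ t : ℝ, b = ((t : ℂ) * Complex.I) • (1 : B)} ∧
    Φ '' {a : A | ∃ c : ℂ, a = c • (1 : A)} = {b : B | ∃ c : ℂ, b = c • (1 : B)} := by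
  obtain ⟨p, hp0, hp1, -, hp⟩ := hAproj
  obtain ⟨q, hq0, hq1, -, hq⟩ := hBproj
  have hAnc := exists_mul_ne_mul_of_isIdempotentElem hAcenter hp0 hp1 hp
  have hBnc := exists_mul_ne_mul_of_isIdempotentElem hBcenter hq0 hq1 hq
  constructor
  · refine hΦ.2.image_setOf_eq fun a => ?_
    rw [← isJordanStarAnnihilator_iff hAcenter, ← isJordanStarAnnihilator_iff hBcenter,
      isJordanStarAnnihilator_map_iff hΦ h]
  · refine hΦ.2.image_setOf_eq fun a => ?_
    rw [← isJordanStarAssociative_iff hAprime hAcenter hAnc,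
      ← isJordanStarAssociative_iff hBprime hBcenter hBnc, isJordanStarAssociative_map_iff hΦ h]
end

section
/- Let A be a unital prime complex *-algebra with a nontrivial projection p₁, set p₂ = 1 − p₁ and A_ij = p_i A p_j for i, j ∈ {1,2}, let B be a complex *-algebra, and let Φ : A → B be a bijective mapping satisfying Φ(xy + yx*) = Φ(x)Φ(y) + Φ(y)Φ(x)* for all x, y ∈ A. Then for arbitrary elements a₁₁ ∈ A₁₁, b₁₂ ∈ A₁₂, c₂₁ ∈ A₂₁ and d₂₂ ∈ A₂₂: (i) Φ(a₁₁ + b₁₂) = Φ(a₁₁) + Φ(b₁₂), (ii) Φ(a₁₁ + c₂₁) = Φ(a₁₁) + Φ(c₂₁), (iii) Φ(b₁₂ + d₂₂) = Φ(b₁₂) + Φ(d₂₂), and (iv) Φ(c₂₁ + d₂₂) = Φ(c₂₁) + Φ(d₂₂). -/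
private lemma pabsorb_left {A : Type*} [Ring A] {p q x : A}
    (hp : p * p = p) (hx : x = p * x * q) : p * x = x := by
  conv_lhs => rw [hx]
  rw [← mul_assoc, ← mul_assoc, hp, ← hx]

private lemma pabsorb_right {A : Type*} [Ring A] {p q x : A}
    (hq : q * q = q) (hx : x = p * x * q) : x * q = x := by
  conv_lhs => rw [hx]
  rw [mul_assoc (p * x) q q, hq]
  exact hx.symm

private lemma pkill_left {A : Type*} [Ring A] {p q r x : A}
    (hrp : r * p = 0) (hx : x = p * x * q) : r * x = 0 := by
  conv_lhs => rw [hx]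
  rw [← mul_assoc, ← mul_assoc, hrp, zero_mul, zero_mul]

private lemma pkill_right {A : Type*} [Ring A] {p q r x : A}
    (hqr : q * r = 0) (hx : x = p * x * q) : x * r = 0 := by
  conv_lhs => rw [hx]
  rw [mul_assoc (p * x) q r, hqr, mul_zero]

private lemma two_cancel {A : Type*} [AddCommGroup A] [Module ℂ A] {x y : A}
    (hxy : x + x = y + y) : x = y := by
  have h2 : (2 : ℂ) • x = (2 : ℂ) • y := by rw [two_smul, two_smul]; exact hxy
  exact smul_right_injective A two_ne_zero h2

private lemma phi_zero {A B : Type*} [Ring A] [StarRing A] [Ring B] [StarRing B]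
    (Φ : A → B) (hΦ : Function.Bijective Φ)
    (h : ∀ x y : A, Φ (x * y + y * star x) = Φ x * Φ y + Φ y * star (Φ x)) :
    Φ 0 = 0 := by
  obtain ⟨s, hs⟩ := hΦ.2 0
  have h1 : (0 : A) * s + s * star 0 = s := hΦ.1 (by rw [h, hs]; simp)
  have hs0 : s = 0 := by simpa using h1.symm
  rw [← hs0, hs]

private lemma key_corner {A B : Type*} [Ring A] [Algebra ℂ A] [StarRing A]
    [Ring B] [StarRing B]
    (e f : A) (hef1 : e + f = 1) (he : e * e = e) (hf : f * f = f)
    (hef : e * f = 0) (hfe : f * e = 0) (hes : star e = e) (hfs : star f = f)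
    (Φ : A → B) (hΦ : Function.Bijective Φ)
    (h : ∀ x y : A, Φ (x * y + y * star x) = Φ x * Φ y + Φ y * star (Φ x))
    (u v : A) (hue : e * u = u) (hu_e : u * e = u) (hfu : f * u = 0) (huf : u * f = 0)
    (hv : e * v * f + f * v * e = v) :
    Φ (u + v) = Φ u + Φ v := by
  have Φ0 : Φ 0 = 0 := phi_zero Φ hΦ h
  obtain ⟨t, ht⟩ := hΦ.2 (Φ u + Φ v)
  -- auxiliary right-multiplication rewrites
  have hxe : ∀ z : A, z * e * e = z * e := fun z => by rw [mul_assoc, he]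
  have hxf : ∀ z : A, z * f * f = z * f := fun z => by rw [mul_assoc, hf]
  have hxef : ∀ z : A, z * e * f = 0 → True := fun _ _ => trivial
  have hzef : ∀ z : A, z * e * f = z * (e * f) := fun z => mul_assoc z e f
  -- products of v with e, f
  have hev : e * v = e * v * f := by
    conv_lhs => rw [← hv]
    simp only [mul_add, ← mul_assoc, he, hef, zero_mul, add_zero]
  have hfv : f * v = f * v * e := by
    conv_lhs => rw [← hv]
    simp only [mul_add, ← mul_assoc, hf, hfe, zero_mul, zero_add]
  have hve : v * e = f * v * e := by
    conv_lhs => rw [← hv]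
    simp only [add_mul, mul_assoc, hef, hfe, he, mul_zero, zero_add]
  have hvf : v * f = e * v * f := by
    conv_lhs => rw [← hv]
    simp only [add_mul, mul_assoc, hef, hfe, hf, mul_zero, add_zero]
  -- the key identity
  have keyid : ∀ x : A,
      Φ (x * t + t * star x) = Φ (x * u + u * star x) + Φ (x * v + v * star x) := by
    intro x
    calc Φ (x * t + t * star x) = Φ x * Φ t + Φ t * star (Φ x) := h x t
      _ = Φ x * (Φ u + Φ v) + (Φ u + Φ v) * star (Φ x) := by rw [ht]
      _ = (Φ x * Φ u + Φ u * star (Φ x)) + (Φ x * Φ v + Φ v * star (Φ x)) := by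
          rw [mul_add, add_mul]; abel
      _ = Φ (x * u + u * star x) + Φ (x * v + v * star x) := by rw [← h, ← h]
  -- step 1 : x = f
  have e1 : Φ (f * t + t * f) = Φ v := by
    have := keyid f
    rw [hfs] at this
    rw [this, hfu, huf, add_zero, Φ0, zero_add, hfv, hvf]
    rw [show f * v * e + e * v * f = v from by rw [add_comm]; exact hv]
  have eq1 : f * t + t * f = v := hΦ.1 (by rw [e1])
  -- components of t
  have c12 : e * t * f = e * v * f := by
    have h' := congrArg (fun z => e * z * f) eq1
    simp only [mul_add, add_mul, ← mul_assoc, he, hf, hef, hfe, zero_mul, zero_add] at h'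
    rw [hxf (e * t)] at h'
    exact h'
  have c21 : f * t * e = f * v * e := by
    have h' := congrArg (fun z => f * z * e) eq1
    simp only [mul_add, add_mul, ← mul_assoc, he, hf, hef, hfe, zero_mul, zero_add] at h'
    rw [mul_assoc (f * t) f e, hfe, mul_zero, add_zero] at h'
    exact h'
  have hfvf : f * v * f = 0 := by
    rw [hfv, mul_assoc (f * v) e f, hef, mul_zero]
  have c22 : f * t * f = 0 := by
    have h' := congrArg (fun z => f * z * f) eq1
    simp only [mul_add, add_mul, ← mul_assoc, hf, hfe, zero_mul, zero_add] at h'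
    rw [hxf (f * t), hfvf] at h'
    exact two_cancel (by rw [h']; abel)
  -- decomposition of t
  have hd : t = e * t * e + e * t * f + f * t * e + f * t * f := by
    have h1 : t = (e + f) * t * (e + f) := by rw [hef1, one_mul, mul_one]
    calc t = (e + f) * t * (e + f) := h1
      _ = e * t * e + e * t * f + f * t * e + f * t * f := by
          rw [add_mul, add_mul, mul_add, mul_add]; abel
  have hdec : t = e * t * e + v := by
    conv_lhs => rw [hd]
    rw [c12, c21, c22, add_zero, add_assoc, hv]
  -- step 2 : x = e - f
  have hstar : star (e - f) = e - f := by rw [star_sub, hes, hfs]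
  have hT1 : (e - f) * u + u * star (e - f) = u + u := by
    rw [hstar, sub_mul, mul_sub, hue, hfu, hu_e, huf]
    abel
  have hT2 : (e - f) * v + v * star (e - f) = 0 := by
    rw [hstar, sub_mul, mul_sub, hev, hfv, hve, hvf]
    abel
  have hT3 : (e - f) * t + t * star (e - f) = e * t * e + e * t * e := by
    rw [hstar]
    conv_lhs => rw [hdec]
    rw [add_mul, mul_add, sub_mul, sub_mul, mul_sub, mul_sub]
    have e1' : e * (e * t * e) = e * t * e := by rw [← mul_assoc, ← mul_assoc, he]
    have e2' : f * (e * t * e) = 0 := by rw [← mul_assoc, ← mul_assoc, hfe, zero_mul, zero_mul]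
    have e3' : e * t * e * e = e * t * e := by rw [mul_assoc (e * t) e e, he]
    have e4' : e * t * e * f = 0 := by rw [mul_assoc (e * t) e f, hef, mul_zero]
    rw [e1', e2', e3', e4', hev, hfv, hve, hvf]
    abel
  have e2 : Φ (e * t * e + e * t * e) = Φ (u + u) := by
    have := keyid (e - f)
    rw [hT1, hT2, hT3, Φ0, add_zero] at this
    exact this
  have heteu : e * t * e = u := two_cancel (hΦ.1 e2)
  have : t = u + v := by rw [hdec, heteu]
  rw [← this, ht]

/-- Claim 2.1: additivity on mixed Peirce corners.
Membership a ∈ A_ij = pᵢ A pⱼ is expressed as a = pᵢ * a * pⱼ. -/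
theorem stmt_14 {A B : Type*}
    [Ring A] [Algebra ℂ A] [StarRing A] [StarModule ℂ A]
    [Ring B] [Algebra ℂ B] [StarRing B] [StarModule ℂ B]
    (hAprime : ∀ a b : A, (∀ x : A, a * x * b = 0) → a = 0 ∨ b = 0)
    (p₁ p₂ : A) (hp₁0 : p₁ ≠ 0) (hp₁1 : p₁ ≠ 1) (hp₁sa : star p₁ = p₁)
    (hp₁idem : p₁ * p₁ = p₁) (hp₂ : p₂ = 1 - p₁)
    (Φ : A → B) (hΦ : Function.Bijective Φ)
    (h : ∀ x y : A, Φ (x * y + y * star x) = Φ x * Φ y + Φ y * star (Φ x))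
    (a₁₁ b₁₂ c₂₁ d₂₂ : A)
    (ha : a₁₁ = p₁ * a₁₁ * p₁) (hb : b₁₂ = p₁ * b₁₂ * p₂)
    (hc : c₂₁ = p₂ * c₂₁ * p₁) (hd : d₂₂ = p₂ * d₂₂ * p₂) :
    Φ (a₁₁ + b₁₂) = Φ a₁₁ + Φ b₁₂ ∧
    Φ (a₁₁ + c₂₁) = Φ a₁₁ + Φ c₂₁ ∧
    Φ (b₁₂ + d₂₂) = Φ b₁₂ + Φ d₂₂ ∧
    Φ (c₂₁ + d₂₂) = Φ c₂₁ + Φ d₂₂ := by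
  have hef1 : p₁ + p₂ = 1 := by rw [hp₂]; abel
  have hfe1 : p₂ + p₁ = 1 := by rw [hp₂]; abel
  have hp12 : p₁ * p₂ = 0 := by rw [hp₂, mul_sub, mul_one, hp₁idem, sub_self]
  have hp21 : p₂ * p₁ = 0 := by rw [hp₂, sub_mul, one_mul, hp₁idem, sub_self]
  have hp22 : p₂ * p₂ = p₂ := by
    rw [hp₂, sub_mul, one_mul, mul_sub, mul_one, hp₁idem]
    abel
  have hps : star p₂ = p₂ := by rw [hp₂, star_sub, star_one, hp₁sa]
  -- corner facts
  have hvb : p₁ * b₁₂ * p₂ + p₂ * b₁₂ * p₁ = b₁₂ := by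
    rw [pabsorb_left hp₁idem hb, pabsorb_right hp22 hb, pkill_left hp21 hb,
      zero_mul, add_zero]
  have hvb' : p₂ * b₁₂ * p₁ + p₁ * b₁₂ * p₂ = b₁₂ := by rw [add_comm]; exact hvb
  have hvc : p₁ * c₂₁ * p₂ + p₂ * c₂₁ * p₁ = c₂₁ := by
    rw [pabsorb_left hp22 hc, pabsorb_right hp₁idem hc, pkill_left hp12 hc,
      zero_mul, zero_add]
  have hvc' : p₂ * c₂₁ * p₁ + p₁ * c₂₁ * p₂ = c₂₁ := by rw [add_comm]; exact hvc
  refine ⟨?_, ?_, ?_, ?_⟩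
  · exact key_corner p₁ p₂ hef1 hp₁idem hp22 hp12 hp21 hp₁sa hps Φ hΦ h a₁₁ b₁₂
      (pabsorb_left hp₁idem ha) (pabsorb_right hp₁idem ha)
      (pkill_left hp21 ha) (pkill_right hp12 ha) hvb
  · exact key_corner p₁ p₂ hef1 hp₁idem hp22 hp12 hp21 hp₁sa hps Φ hΦ h a₁₁ c₂₁
      (pabsorb_left hp₁idem ha) (pabsorb_right hp₁idem ha)
      (pkill_left hp21 ha) (pkill_right hp12 ha) hvc
  · have := key_corner p₂ p₁ hfe1 hp22 hp₁idem hp21 hp12 hps hp₁sa Φ hΦ h d₂₂ b₁₂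
      (pabsorb_left hp22 hd) (pabsorb_right hp22 hd)
      (pkill_left hp12 hd) (pkill_right hp21 hd) hvb'
    rw [add_comm b₁₂ d₂₂, add_comm (Φ b₁₂) (Φ d₂₂)]
    exact this
  · have := key_corner p₂ p₁ hfe1 hp22 hp₁idem hp21 hp12 hps hp₁sa Φ hΦ h d₂₂ c₂₁
      (pabsorb_left hp22 hd) (pabsorb_right hp22 hd)
      (pkill_left hp12 hd) (pkill_right hp21 hd) hvc'
    rw [add_comm c₂₁ d₂₂, add_comm (Φ c₂₁) (Φ d₂₂)]
    exact this
end
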